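/- arXiv:2005.06555 — 9 statements merged into one kernel-verified Lean document; each statement's English description precedes it below -/
import Mathlib

section
/- Let k be a positive integer and r > 0, and set C = 3k/r. Whenever (a_n, b_n)_{n ∈ N} is a countable family of open intervals of the real line (with endpoints allowed to be −∞ or +∞) such that every real number belongs to at most k of the intervals (a_n, b_n), and such that ℝ = ⋃_{n ∈ N} [a_n + r, b_n − r], then there exists a family (ψ_n)_{n ∈ N} of C-Lipschitz functions ψ_n : ℝ → [0,1] such that ∑_{n ∈ N} ψ_n(u) = 1 for every u ∈ ℝ, and, for each n ∈ N and u ∈ ℝ, ψ_n(u) > 0 if and only if u ∈ (a_n, b_n). -/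
/-!
Each interval `Iₙ = (aₙ, bₙ)` carries the bump `gₙ = min 1 (dist(·, Iₙᶜ) / r)`, which is
`1/r`-Lipschitz, positive exactly on `Iₙ` and equal to `1` on `[aₙ + r, bₙ − r]`. Since these
closed intervals cover `ℝ`, the sum `S = ∑ₙ gₙ` is at least `1`, and since at most `k` of the
`gₙ` are nonzero at a point, `S` is `2k/r`-Lipschitz. The quotients `ψₙ = gₙ / S` then form the
partition of unity, and `gₙ ≤ S` keeps their Lipschitz constant at `1/r + 2k/r ≤ 3k/r`.
-/

open Function Metric Set
open scoped NNReal

theorem exists_lipschitzWith_bump_of_isOpen {X : Type*} [PseudoMetricSpace X] {s : Set X}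
    (hs : IsOpen s) {r : ℝ} (hr : 0 < r) :
    ∃ g : X → ℝ, LipschitzWith (Real.toNNReal r⁻¹) g ∧ (∀ x, g x ∈ Icc 0 1) ∧
      (∀ x, 0 < g x ↔ x ∈ s) ∧ ∀ x, ball x r ⊆ s → g x = 1 := by
  -- `infDist x ∅ = 0`, so the case `s = univ` needs the constant bump.
  rcases sᶜ.eq_empty_or_nonempty with hsc | hsc
  · refine ⟨fun _ => 1, (LipschitzWith.const 1).weaken bot_le, fun _ => by simp, fun x => ?_,
      fun _ _ => rfl⟩
    simp [compl_empty_iff.mp hsc]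
  refine ⟨fun x => min 1 (infDist x sᶜ / r), ?_, fun x => ⟨?_, min_le_left _ _⟩,
    fun x => ?_, fun x hx => ?_⟩
  · refine LipschitzWith.const_min (.of_dist_le_mul fun x y => ?_) 1
    rw [Real.dist_eq, ← sub_div, abs_div, abs_of_pos hr, Real.coe_toNNReal _ (inv_nonneg.2 hr.le),
      inv_mul_eq_div]
    gcongr
    simpa [Real.dist_eq] using (lipschitz_infDist_pt sᶜ).dist_le_mul x y
  · exact le_min zero_le_one (div_nonneg infDist_nonneg hr.le)
  · rw [lt_min_iff, div_pos_iff_of_pos_right hr,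
      ← hs.isClosed_compl.notMem_iff_infDist_pos hsc]
    simp
  · refine min_eq_left ((one_le_div hr).2 ((le_infDist hsc).2 fun y hy => ?_))
    by_contra! hxy
    exact hy (hx (mem_ball'.2 hxy))

theorem isOpen_setOf_ereal_lt_and_lt (a b : EReal) : IsOpen {u : ℝ | a < u ∧ u < b} :=
  isOpen_Ioo.preimage continuous_coe_real_ereal

theorem EReal.ball_subset_of_add_le_of_le_sub {a b : EReal} {r u : ℝ} (ha : a + r ≤ u)
    (hb : u ≤ b - r) : ball u r ⊆ {v : ℝ | a < v ∧ v < b} := by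
  intro v hv
  rw [mem_ball, Real.dist_eq, abs_lt] at hv
  have ha' : a ≤ ((u - r : ℝ) : EReal) := by
    rwa [EReal.coe_sub, EReal.le_sub_iff_add_le (.inl (EReal.coe_ne_bot r))
      (.inl (EReal.coe_ne_top r))]
  have hb' : ((u + r : ℝ) : EReal) ≤ b := by
    rwa [EReal.coe_add, ← EReal.le_sub_iff_add_le (.inl (EReal.coe_ne_bot r))
      (.inl (EReal.coe_ne_top r))]
  exact ⟨ha'.trans_lt (EReal.coe_lt_coe_iff.2 (by linarith)),
    (EReal.coe_lt_coe_iff.2 (by linarith)).trans_le hb'⟩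

theorem abs_div_sub_div_le_of_one_le {a b S T : ℝ} (hS : 1 ≤ S) (hT : 1 ≤ T) (hb : 0 ≤ b)
    (hbT : b ≤ T) : |a / S - b / T| ≤ |a - b| + |S - T| := by
  have hS0 : 0 < S := by linarith
  have hT0 : 0 < T := by linarith
  calc |a / S - b / T| = |(a - b) / S + b / T * ((T - S) / S)| := by
        congr 1; field_simp; ring
    _ ≤ |(a - b) / S| + |b / T| * |(T - S) / S| := (abs_add_le _ _).trans_eq (by rw [abs_mul])
    _ ≤ |a - b| + 1 * |S - T| := by
        gcongr ?_ + ?_ * ?_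
        · rw [abs_div, abs_of_pos hS0]; exact div_le_self (abs_nonneg _) hS
        · rw [abs_of_nonneg (div_nonneg hb hT0.le)]; exact (div_le_one hT0).2 hbT
        · rw [abs_div, abs_of_pos hS0, abs_sub_comm]; exact div_le_self (abs_nonneg _) hS
    _ = |a - b| + |S - T| := by rw [one_mul]

section NormalizeBySum

variable {X ι : Type*} {g : ι → X → ℝ}

theorem lipschitzWith_finsum [PseudoMetricSpace X] {K : ℝ≥0} {k : ℕ}
    (hg : ∀ i, LipschitzWith K (g i)) (hk : ∀ x, (support (g · x)).encard ≤ k) :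
    LipschitzWith (2 * k * K) fun x => ∑ᶠ i, g i x := by
  classical
  refine .of_dist_le_mul fun x y => ?_
  have hfin x := finite_of_encard_le_coe (hk x)
  have hcard x : (hfin x).toFinset.card ≤ k := by
    have := (hfin x).encard_eq_coe_toFinset_card ▸ hk x
    exact_mod_cast this
  set F := (hfin x).toFinset ∪ (hfin y).toFinset
  have hF : (F.card : ℝ) ≤ 2 * k := by
    have := (Finset.card_union_le _ _).trans (add_le_add (hcard x) (hcard y))
    exact_mod_cast this.trans_eq (two_mul k).symm
  rw [finsum_eq_sum_of_support_subset _ (s := F) (by simp [F]),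
    finsum_eq_sum_of_support_subset _ (s := F) (by simp [F]), Real.dist_eq,
    ← Finset.sum_sub_distrib]
  calc |∑ i ∈ F, (g i x - g i y)| ≤ ∑ i ∈ F, |g i x - g i y| := Finset.abs_sum_le_sum_abs _ _
    _ ≤ F.card • (K * dist x y) := Finset.sum_le_card_nsmul _ _ _ fun i _ => by
        simpa [Real.dist_eq] using (hg i).dist_le_mul x y
    _ ≤ 2 * k * K * dist x y := by
        rw [nsmul_eq_mul, ← mul_assoc]
        gcongr

theorem le_finsum_of_nonneg (hg0 : ∀ i x, 0 ≤ g i x) (hfin : ∀ x, (support (g · x)).Finite)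
    (i : ι) (x : X) : g i x ≤ ∑ᶠ j, g j x :=
  single_le_finsum i (hfin x) fun j => hg0 j x

variable (g) in
noncomputable def normalizeBySum (i : ι) (x : X) : ℝ := g i x / ∑ᶠ j, g j x

variable (hg0 : ∀ i x, 0 ≤ g i x) (hfin : ∀ x, (support (g · x)).Finite)
  (hone : ∀ x, ∃ i, 1 ≤ g i x)
include hg0 hfin hone

theorem one_le_finsum (x : X) : 1 ≤ ∑ᶠ j, g j x :=
  let ⟨i, hi⟩ := hone x
  hi.trans (le_finsum_of_nonneg hg0 hfin i x)

theorem normalizeBySum_mem_Icc (i : ι) (x : X) : normalizeBySum g i x ∈ Icc 0 1 :=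
  have hS := zero_lt_one.trans_le (one_le_finsum hg0 hfin hone x)
  ⟨div_nonneg (hg0 i x) hS.le, (div_le_one hS).2 (le_finsum_of_nonneg hg0 hfin i x)⟩

theorem normalizeBySum_pos_iff (i : ι) (x : X) : 0 < normalizeBySum g i x ↔ 0 < g i x :=
  div_pos_iff_of_pos_right (zero_lt_one.trans_le (one_le_finsum hg0 hfin hone x))

theorem normalizeBySum_ne_zero_iff (i : ι) (x : X) : normalizeBySum g i x ≠ 0 ↔ g i x ≠ 0 :=
  div_ne_zero_iff.trans (and_iff_left (one_pos.trans_le (one_le_finsum hg0 hfin hone x)).ne')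

theorem finsum_normalizeBySum (x : X) : ∑ᶠ i, normalizeBySum g i x = 1 := by
  simp only [normalizeBySum, div_eq_mul_inv, ← finsum_mul]
  exact mul_inv_cancel₀ (one_pos.trans_le (one_le_finsum hg0 hfin hone x)).ne'

theorem lipschitzWith_normalizeBySum [PseudoMetricSpace X] {K : ℝ≥0} {k : ℕ}
    (hg : ∀ i, LipschitzWith K (g i)) (hk : ∀ x, (support (g · x)).encard ≤ k) (i : ι) :
    LipschitzWith ((2 * k + 1) * K) (normalizeBySum g i) := by
  refine .of_dist_le_mul fun x y => ?_
  calc dist (normalizeBySum g i x) (normalizeBySum g i y)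
      ≤ |g i x - g i y| + |∑ᶠ j, g j x - ∑ᶠ j, g j y| :=
        abs_div_sub_div_le_of_one_le (one_le_finsum hg0 hfin hone x)
          (one_le_finsum hg0 hfin hone y) (hg0 i y) (le_finsum_of_nonneg hg0 hfin i y)
    _ ≤ K * dist x y + 2 * k * K * dist x y := by
        simpa [Real.dist_eq] using
          add_le_add ((hg i).dist_le_mul x y) ((lipschitzWith_finsum hg hk).dist_le_mul x y)
    _ = _ := by push_cast; ring

end NormalizeBySum

/-- **Partition of unity subordinated to a k-overlapping family of open intervals.**
Let `k` be a positive integer and `r > 0`, and set `C = 3k/r`.  Whenever `(aₙ, bₙ)_{n ∈ N}` is a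
countable family of open intervals of the real line (endpoints allowed to be `±∞`) such that every
real number belongs to at most `k` of the intervals `(aₙ, bₙ)`, and such that
`ℝ = ⋃ₙ [aₙ + r, bₙ − r]`, then there is a family `(ψₙ)` of `C`-Lipschitz functions
`ψₙ : ℝ → [0,1]` with `∑ₙ ψₙ(u) = 1` for every `u`, and `ψₙ(u) > 0 ↔ u ∈ (aₙ, bₙ)`. -/
theorem stmt0 (k : ℕ) (hk : 0 < k) (r : ℝ) (hr : 0 < r)
    (N : Type) [Countable N] (a b : N → EReal)
    (hoverlap : ∀ u : ℝ, {n : N | a n < (u : EReal) ∧ (u : EReal) < b n}.encard ≤ (k : ℕ∞))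
    (hcover : ∀ u : ℝ, ∃ n : N, a n + (r : EReal) ≤ (u : EReal) ∧ (u : EReal) ≤ b n - (r : EReal)) :
    ∃ ψ : N → ℝ → ℝ,
      (∀ n, ∀ u v : ℝ, |ψ n u - ψ n v| ≤ (3 * k / r) * |u - v|) ∧
      (∀ n, ∀ u : ℝ, ψ n u ∈ Set.Icc (0 : ℝ) 1) ∧
      (∀ u : ℝ, {n : N | ψ n u ≠ 0}.Finite) ∧
      (∀ u : ℝ, ∑ᶠ n : N, ψ n u = 1) ∧
      (∀ n, ∀ u : ℝ, 0 < ψ n u ↔ (a n < (u : EReal) ∧ (u : EReal) < b n)) := by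
  choose g hg_lip hg_mem hg_pos hg_one using fun n =>
    exists_lipschitzWith_bump_of_isOpen (isOpen_setOf_ereal_lt_and_lt (a n) (b n)) hr
  have hg0 n u : 0 ≤ g n u := (hg_mem n u).1
  have hsupp u : support (g · u) = {n | a n < u ∧ u < b n} :=
    ext fun n => (hg0 n u).lt_iff_ne'.symm.trans (hg_pos n u)
  have hk' u : (support (g · u)).encard ≤ k := hsupp u ▸ hoverlap u
  have hfin u := finite_of_encard_le_coe (hk' u)
  have hone u : ∃ n, 1 ≤ g n u := by
    obtain ⟨n, ha, hb⟩ := hcover u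
    exact ⟨n, (hg_one n u (EReal.ball_subset_of_add_le_of_le_sub ha hb)).ge⟩
  refine ⟨normalizeBySum g, fun n u v => ?_, normalizeBySum_mem_Icc hg0 hfin hone,
    fun u => (hfin u).subset fun n hn => (normalizeBySum_ne_zero_iff hg0 hfin hone n u).1 hn,
    finsum_normalizeBySum hg0 hfin hone,
    fun n u => (normalizeBySum_pos_iff hg0 hfin hone n u).trans (hg_pos n u)⟩
  have hk1 : (1 : ℝ) ≤ k := by exact_mod_cast hk
  calc |normalizeBySum g n u - normalizeBySum g n v| ≤ (2 * k + 1) * r⁻¹ * |u - v| := by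
        simpa [Real.dist_eq, hr.le] using
          (lipschitzWith_normalizeBySum hg0 hfin hone hg_lip hk' n).dist_le_mul u v
    _ ≤ 3 * k / r * |u - v| := by
        rw [div_eq_mul_inv]; gcongr; linarith
end

section
/- Let (S, d) be a metric space, let k be a positive integer, and let (f_i)_{i ∈ I} be a family of 1-Lipschitz functions f_i : S → [0, ∞) such that for every x ∈ S the set {i ∈ I : f_i(x) ≠ 0} has at most k elements. Then the pointwise sum F(x) = ∑_{i ∈ I} f_i(x) is well-defined (at each point only finitely many terms are nonzero) and F is 2k-Lipschitz. -/
open Function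

theorem abs_finsum_sub_finsum_le {I : Type*} {g h : I → ℝ} {s : Set I} (hs : s.Finite)
    (hg : support g ⊆ s) (hh : support h ⊆ s) {c : ℝ} (hc : ∀ i ∈ s, |g i - h i| ≤ c) :
    |∑ᶠ i, g i - ∑ᶠ i, h i| ≤ s.ncard * c := by
  rw [finsum_eq_sum_of_support_subset g (hs.coe_toFinset.symm ▸ hg),
    finsum_eq_sum_of_support_subset h (hs.coe_toFinset.symm ▸ hh), ← Finset.sum_sub_distrib,
    Set.ncard_eq_toFinset_card s hs]
  calc |∑ i ∈ hs.toFinset, (g i - h i)| ≤ ∑ i ∈ hs.toFinset, |g i - h i| :=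
        Finset.abs_sum_le_sum_abs _ _
    _ ≤ ∑ _i ∈ hs.toFinset, c := Finset.sum_le_sum fun i hi => hc i (hs.mem_toFinset.mp hi)
    _ = hs.toFinset.card * c := by rw [Finset.sum_const, nsmul_eq_mul]

theorem stmt1_general (S : Type) [MetricSpace S] (k : ℕ)
    (I : Type) (f : I → S → ℝ)
    (hlip : ∀ i, ∀ x y : S, |f i x - f i y| ≤ dist x y)
    (hoverlap : ∀ x : S, {i : I | f i x ≠ 0}.encard ≤ (k : ℕ∞)) :
    (∀ x : S, {i : I | f i x ≠ 0}.Finite) ∧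
    (∀ x y : S, |(∑ᶠ i : I, f i x) - ∑ᶠ i : I, f i y| ≤ (2 * k) * dist x y) := by
  have hsupp x := Set.encard_le_coe_iff_finite_ncard_le.mp (hoverlap x)
  refine ⟨fun x => (hsupp x).1, fun x y => ?_⟩
  have hcard : ({i : I | f i x ≠ 0} ∪ {i : I | f i y ≠ 0}).ncard ≤ 2 * k := by
    linarith [Set.ncard_union_le {i : I | f i x ≠ 0} {i : I | f i y ≠ 0}, (hsupp x).2, (hsupp y).2]
  calc |(∑ᶠ i : I, f i x) - ∑ᶠ i : I, f i y|
      ≤ ({i : I | f i x ≠ 0} ∪ {i : I | f i y ≠ 0}).ncard * dist x y :=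
        abs_finsum_sub_finsum_le ((hsupp x).1.union (hsupp y).1) Set.subset_union_left
          Set.subset_union_right fun i _ => hlip i x y
    _ ≤ (2 * k) * dist x y := by gcongr; exact_mod_cast hcard

/-- **A k-overlapping sum of 1-Lipschitz nonnegative functions is 2k-Lipschitz.**
Let `(S, d)` be a metric space, `k` a positive integer, and `(f_i)_{i ∈ I}` a family of
`1`-Lipschitz functions `f_i : S → [0, ∞)` such that for every `x ∈ S` the set
`{i : f_i x ≠ 0}` has at most `k` elements.  Then the pointwise sum `F x = ∑ᵢ f_i x` is
well-defined (at each point only finitely many terms are nonzero) and `F` is `2k`-Lipschitz. -/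
theorem stmt1 (S : Type) [MetricSpace S] (k : ℕ) (hk : 0 < k)
    (I : Type) (f : I → S → ℝ)
    (hnonneg : ∀ i, ∀ x : S, 0 ≤ f i x)
    (hlip : ∀ i, ∀ x y : S, |f i x - f i y| ≤ dist x y)
    (hoverlap : ∀ x : S, {i : I | f i x ≠ 0}.encard ≤ (k : ℕ∞)) :
    (∀ x : S, {i : I | f i x ≠ 0}.Finite) ∧
    (∀ x y : S, |(∑ᶠ i : I, f i x) - ∑ᶠ i : I, f i y| ≤ (2 * k) * dist x y) :=
  stmt1_general S k I f hlip hoverlap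
end

section
/- Let (M, d) be a metric space and let N ⊆ M be a nonempty closed subset which, as a metric space with the induced metric, has doubling constant D ≥ 2. Then there exist a countable index set I, a family (V_i)_{i ∈ I} of subsets of M∖N, a family (φ_i)_{i ∈ I} of functions φ_i : M∖N → [0, ∞), and points (x_i)_{i ∈ I} in N such that: (1) for every i ∈ I and every x ∈ V_i one has d(x_i, x) ≤ 7·d(x, N); (2) each V_i is open in M∖N, the sets V_i cover M∖N, and every point of M∖N belongs to at most 3D⁴ of the sets V_i; (3) each φ_i is 1-Lipschitz and {x ∈ M∖N : φ_i(x) > 0} ⊆ V_i; (4) for every x ∈ M∖N there exists i ∈ I with φ_i(x) > d(x, N)/4. -/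
/-!
For each dyadic scale `2 ^ k` choose a maximal `2 ^ (k + 1)`-separated subset `S k` of `N`.
Iterating the doubling property bounds the number of separated points in a ball, so each `S k`
is countable. The piece attached to `y ∈ S k` is the set of `z` with `d(z, y) < 7 · 2 ^ k` and
`2 ^ k < d(z, N) < 8 · 2 ^ k`, and its bump is the positive part of the least of the three slacks,
hence `1`-Lipschitz. If `2 · 2 ^ k ≤ d(z, N) < 4 · 2 ^ k`, a point of `S k` within `2 ^ (k + 1)` of
an almost nearest point of `N` is close enough to `z` for its bump to exceed `d(z, N) / 4`.
Conversely `z` meets pieces of only three scales, and at each scale their centres are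
`2 ^ (k + 1)`-separated points of a ball of radius `14 · 2 ^ k`, so there are at most `D ^ 4`.
-/

/-- A subset `N` of a metric space `M` has doubling constant `D` (as a metric space with the
induced metric) if every closed ball in `N` of radius `ρ > 0` can be covered by at most `D`
closed balls in `N` of radius `ρ/2` with centers in `N`. -/
def SubsetDoublingConstant {M : Type*} [MetricSpace M] (N : Set M) (D : ℕ) : Prop :=
  ∀ y ∈ N, ∀ ρ : ℝ, 0 < ρ → ∃ T : Finset M, ↑T ⊆ N ∧ T.card ≤ D ∧
    N ∩ Metric.closedBall y ρ ⊆ ⋃ c ∈ T, Metric.closedBall c (ρ / 2)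

open Metric Set

lemma Set.encard_sigma_le_card_mul {ι : Type*} {α : ι → Type*} (s : Set (Σ k, α k))
    (K : Finset ι) (hK : ∀ i ∈ s, i.1 ∈ K) (B : ℕ∞)
    (hB : ∀ k, (Sigma.mk k ⁻¹' s).encard ≤ B) : s.encard ≤ K.card * B := by
  have hcover : s ⊆ ⋃ k ∈ K, Sigma.mk k '' (Sigma.mk k ⁻¹' s) := by
    rintro ⟨k, a⟩ hi
    exact mem_biUnion (hK _ hi) ⟨a, hi, rfl⟩
  calc s.encard ≤ ∑ k ∈ K, (Sigma.mk k '' (Sigma.mk k ⁻¹' s)).encard :=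
        (encard_le_encard hcover).trans (K.set_encard_biUnion_le _)
    _ ≤ ∑ _k ∈ K, B := Finset.sum_le_sum fun k _ => by
        rw [sigma_mk_injective.encard_image]; exact hB k
    _ = K.card * B := by rw [Finset.sum_const, nsmul_eq_mul]

section

variable {M : Type*} [MetricSpace M]

lemma exists_separated_net (N : Set M) {r : ℝ} (hr : 0 ≤ r) :
    ∃ S ⊆ N, S.Pairwise (fun y y' => r < dist y y') ∧ ∀ p ∈ N, ∃ y ∈ S, dist p y ≤ r := by
  obtain ⟨S, hS⟩ := zorn_subset {S : Set M | S ⊆ N ∧ S.Pairwise (fun y y' => r < dist y y')}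
    fun c hc hchain => ⟨⋃₀ c, ⟨sUnion_subset fun s hs => (hc hs).1,
      hchain.pairwise_sUnion.2 fun s hs => (hc hs).2⟩, fun s hs => subset_sUnion_of_mem hs⟩
  refine ⟨S, hS.prop.1, hS.prop.2, fun p hp => ?_⟩
  by_contra! hfar
  have hpS : p ∉ S := fun hpS => by simpa [hr.not_gt] using hfar p hpS
  have hins : insert p S ⊆ N ∧ (insert p S).Pairwise (fun y y' => r < dist y y') :=
    ⟨insert_subset hp hS.prop.1, hS.prop.2.insert fun y hy _ =>
      ⟨hfar y hy, by rw [dist_comm]; exact hfar y hy⟩⟩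
  exact hpS (hS.mem_of_prop_insert hins)

namespace SubsetDoublingConstant

variable {N : Set M} {D : ℕ}

/-- `m` halvings cover the ball by `D ^ m` balls of radius `ρ / 2 ^ m`, each meeting `T` at most
once. -/
lemma encard_le_pow_of_separated (hdoub : SubsetDoublingConstant N D) (m : ℕ) {c : M}
    (hc : c ∈ N) {ρ : ℝ} (hρ : 0 < ρ) {T : Set M} (hT : T ⊆ N ∩ closedBall c ρ)
    (hsep : T.Pairwise fun y y' => 2 * ρ / 2 ^ m < dist y y') : T.encard ≤ D ^ m := by
  induction m generalizing c ρ T with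
  | zero =>
    rw [pow_zero, encard_le_one_iff]
    intro a b ha hb
    by_contra hab
    have hab' := hsep ha hb hab
    have hac := (hT ha).2
    have hbc := (hT hb).2
    rw [mem_closedBall] at hac hbc
    linarith [dist_triangle_right a b c]
  | succ m ih =>
    obtain ⟨F, hFN, hFcard, hcov⟩ := hdoub c hc ρ hρ
    have hpiece : ∀ c' ∈ F, (T ∩ closedBall c' (ρ / 2)).encard ≤ D ^ m := fun c' hc' =>
      ih (hFN hc') (half_pos hρ) (fun y hy => ⟨(hT hy.1).1, hy.2⟩)
        ((hsep.mono inter_subset_left).imp fun y y' h => by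
          rwa [show 2 * (ρ / 2) / 2 ^ m = 2 * ρ / 2 ^ (m + 1) by rw [pow_succ]; ring])
    have hTcov : T ⊆ ⋃ c' ∈ F, T ∩ closedBall c' (ρ / 2) := fun y hy => by
      obtain ⟨c', hc', hyc'⟩ := mem_iUnion₂.1 (hcov (hT hy))
      exact mem_iUnion₂.2 ⟨c', hc', hy, hyc'⟩
    calc T.encard ≤ ∑ c' ∈ F, (T ∩ closedBall c' (ρ / 2)).encard :=
          (encard_le_encard hTcov).trans (F.set_encard_biUnion_le _)
      _ ≤ F.card * (D : ℕ∞) ^ m := by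
          rw [← nsmul_eq_mul]; exact Finset.sum_le_card_nsmul F _ _ hpiece
      _ ≤ D * (D : ℕ∞) ^ m := by gcongr
      _ = D ^ (m + 1) := (pow_succ' _ _).symm

lemma countable_of_separated (hdoub : SubsetDoublingConstant N D) {S : Set M} (hSN : S ⊆ N)
    {r : ℝ} (hr : 0 < r) (hsep : S.Pairwise fun y y' => r < dist y y') : S.Countable := by
  rcases S.eq_empty_or_nonempty with rfl | ⟨y₀, hy₀⟩
  · exact countable_empty
  have hcover : S ⊆ ⋃ n : ℕ, S ∩ closedBall y₀ (n + 1) := fun y hy =>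
    mem_iUnion.2 ⟨⌈dist y y₀⌉₊, hy, mem_closedBall.2 ((Nat.le_ceil _).trans (by linarith))⟩
  refine (countable_iUnion fun n => Finite.countable ?_).mono hcover
  obtain ⟨m, hm⟩ := pow_unbounded_of_one_lt (2 * ((n : ℝ) + 1) / r) one_lt_two
  rw [div_lt_iff₀ hr] at hm
  have hsep' : (S ∩ closedBall y₀ (n + 1)).Pairwise fun y y' => 2 * (n + 1) / 2 ^ m < dist y y' :=
    (hsep.mono inter_subset_left).imp fun y y' h => by
      rw [div_lt_iff₀ (by positivity)]
      nlinarith [mul_lt_mul_of_pos_left h (pow_pos two_pos m)]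
  refine finite_of_encard_le_coe (k := D ^ m) ?_
  exact_mod_cast hdoub.encard_le_pow_of_separated m (hSN hy₀) (by positivity)
    (inter_subset_inter_left _ hSN) hsep'

lemma encard_inter_ball_le (hdoub : SubsetDoublingConstant N D) {S : Set M} (hSN : S ⊆ N)
    {r : ℝ} (hsep : S.Pairwise fun y y' => 2 * r < dist y y') (z : M) :
    (S ∩ ball z (7 * r)).encard ≤ D ^ 4 := by
  rcases (S ∩ ball z (7 * r)).eq_empty_or_nonempty with h | ⟨y₀, hy₀S, hy₀z⟩
  · simp [h]
  have hr : 0 < r := by have := (dist_nonneg).trans_lt (mem_ball'.1 hy₀z); linarith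
  refine hdoub.encard_le_pow_of_separated 4 (hSN hy₀S) (ρ := 16 * r) (by positivity)
    (fun y hy => ⟨hSN hy.1, ?_⟩) ((hsep.mono inter_subset_left).imp fun y y' h => by linarith)
  rw [mem_closedBall]
  linarith [dist_triangle y z y₀, dist_comm z y₀, mem_ball.1 hy.2, mem_ball.1 hy₀z]

end SubsetDoublingConstant

section Whitney

variable (N : Set M) (r : ℝ) (y : M)

def whitneySet : Set M :=
  {z | dist z y < 7 * r ∧ r < infDist z N ∧ infDist z N < 8 * r}

noncomputable def whitneyBump (z : M) : ℝ :=
  max 0 (min (7 * r - dist z y) (min (infDist z N - r) (8 * r - infDist z N)))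

lemma isOpen_whitneySet : IsOpen (whitneySet N r y) :=
  (isOpen_lt (continuous_id.dist continuous_const) continuous_const).inter
    ((isOpen_lt continuous_const (continuous_infDist_pt N)).inter
      (isOpen_lt (continuous_infDist_pt N) continuous_const))

variable {N r y}

lemma whitneySet_subset_compl (hr : 0 ≤ r) : whitneySet N r y ⊆ Nᶜ := fun z hz hzN => by
  linarith [hz.2.1.trans_eq (infDist_zero_of_mem hzN)]

lemma dist_le_of_mem_whitneySet {z : M} (hz : z ∈ whitneySet N r y) :
    dist y z ≤ 7 * infDist z N := by
  rw [dist_comm]; linarith [hz.1, hz.2.1]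

variable (N r y)

lemma whitneyBump_nonneg (z : M) : 0 ≤ whitneyBump N r y z := le_max_left _ _

lemma lipschitzWith_whitneyBump : LipschitzWith 1 (whitneyBump N r y) := by
  have hdist : LipschitzWith 1 fun z => 7 * r - dist z y := by
    simpa using (LipschitzWith.const (7 * r)).sub (LipschitzWith.dist_left y)
  have hlow : LipschitzWith 1 fun z => infDist z N - r := by
    simpa using (lipschitz_infDist_pt N).sub (LipschitzWith.const r)
  have hupp : LipschitzWith 1 fun z => 8 * r - infDist z N := by
    simpa using (LipschitzWith.const (8 * r)).sub (lipschitz_infDist_pt N)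
  unfold whitneyBump
  simpa using (hdist.min (hlow.min hupp)).const_max 0

variable {N r y}

lemma mem_whitneySet_of_whitneyBump_pos {z : M} (hz : 0 < whitneyBump N r y z) :
    z ∈ whitneySet N r y := by
  simp only [whitneyBump, lt_max_iff, lt_min_iff, lt_irrefl, false_or] at hz
  exact ⟨by linarith [hz.1], by linarith [hz.2.1], by linarith [hz.2.2]⟩

lemma exists_infDist_div_four_lt_whitneyBump (hN : N.Nonempty) {S : Set M}
    (hS : ∀ p ∈ N, ∃ y ∈ S, dist p y ≤ 2 * r) {z : M} (h2r : 2 * r ≤ infDist z N)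
    (h4r : infDist z N < 4 * r) : ∃ y ∈ S, infDist z N / 4 < whitneyBump N r y z := by
  -- the slack makes `d(z, y) < d(z, N) + slack + 2r = 7r - d(z, N) / 4`
  obtain ⟨p, hpN, hzp⟩ := (infDist_lt_iff hN).1
    (show infDist z N < infDist z N + (5 * r - 5 * infDist z N / 4) by linarith)
  obtain ⟨y, hyS, hpy⟩ := hS p hpN
  refine ⟨y, hyS, lt_max_of_lt_right (lt_min ?_ (lt_min ?_ ?_))⟩ <;>
    linarith [dist_triangle z p y]

end Whitney

lemma mem_Icc_of_mem_whitneySet {N : Set M} {k n : ℤ} {y z : M}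
    (hz : z ∈ whitneySet N (2 ^ k) y) (hn : infDist z N ∈ Ico ((2 : ℝ) ^ n) (2 ^ (n + 1))) :
    k ∈ Finset.Icc (n - 2) n := by
  have hkn : (2 : ℝ) ^ k < 2 ^ (n + 1) := hz.2.1.trans hn.2
  have hnk : (2 : ℝ) ^ n < 2 ^ (k + 3) := by
    rw [zpow_add₀ two_ne_zero, show (2 : ℝ) ^ (3 : ℤ) = 8 by norm_num]
    linarith [hn.1, hz.2.2]
  rw [zpow_lt_zpow_iff_right₀ one_lt_two] at hkn hnk
  rw [Finset.mem_Icc]; omega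

lemma SubsetDoublingConstant.encard_setOf_mem_whitneySet_le {N : Set M} {D : ℕ}
    (hdoub : SubsetDoublingConstant N D) {S : ℤ → Set M} (hSN : ∀ k, S k ⊆ N)
    (hsep : ∀ k, (S k).Pairwise fun y y' => 2 * 2 ^ k < dist y y') {z : M}
    (hz : 0 < infDist z N) :
    {i : Σ k, S k | z ∈ whitneySet N (2 ^ i.1) i.2}.encard ≤ 3 * D ^ 4 := by
  obtain ⟨n, hn⟩ := exists_mem_Ico_zpow hz one_lt_two
  calc _ ≤ (Finset.Icc (n - 2) n).card * (D : ℕ∞) ^ 4 :=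
        encard_sigma_le_card_mul _ _ (fun i hi => mem_Icc_of_mem_whitneySet hi hn) _ fun k =>
          (encard_le_encard (t := ((↑) : S k → M) ⁻¹' (S k ∩ ball z (7 * 2 ^ k)))
            fun y hy => ⟨y.2, mem_ball'.2 hy.1⟩).trans
            ((encard_preimage_val_le_encard_right _ _).trans
              (hdoub.encard_inter_ball_le (hSN k) (hsep k) z))
    _ = 3 * D ^ 4 := by simp [show n + 1 - (n - 2) = 3 by ring]

end

theorem stmt3_general (M : Type) [MetricSpace M] (N : Set M) (hne : N.Nonempty)
    (hcl : IsClosed N) (D : ℕ) (hdoub : SubsetDoublingConstant N D) :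
    ∃ (I : Type) (_ : Countable I) (V : I → Set M) (φ : I → M → ℝ) (x : I → M),
      (∀ i, x i ∈ N) ∧
      (∀ i, ∀ z ∈ V i, dist (x i) z ≤ 7 * Metric.infDist z N) ∧
      (∀ i, V i ⊆ Nᶜ) ∧
      (∀ i, IsOpen (Subtype.val ⁻¹' (V i) : Set {z : M // z ∉ N})) ∧
      (∀ z : M, z ∉ N → ∃ i, z ∈ V i) ∧
      (∀ z : M, z ∉ N → {i : I | z ∈ V i}.encard ≤ ((3 * D ^ 4 : ℕ) : ℕ∞)) ∧
      (∀ i, ∀ z : M, z ∉ N → 0 ≤ φ i z) ∧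
      (∀ i, ∀ z w : M, z ∉ N → w ∉ N → |φ i z - φ i w| ≤ dist z w) ∧
      (∀ i, ∀ z : M, z ∉ N → 0 < φ i z → z ∈ V i) ∧
      (∀ z : M, z ∉ N → ∃ i, Metric.infDist z N / 4 < φ i z) := by
  choose S hSN hSsep hSnet using fun k : ℤ =>
    exists_separated_net N (r := 2 * 2 ^ k) (by positivity)
  have (k : ℤ) : Countable (S k) :=
    (hdoub.countable_of_separated (hSN k) (by positivity) (hSsep k)).to_subtype
  have hpos (z : M) (hz : z ∉ N) : 0 < infDist z N := (hcl.notMem_iff_infDist_pos hne).1 hz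
  have hbump (z : M) (hz : z ∉ N) :
      ∃ i : Σ k, S k, infDist z N / 4 < whitneyBump N (2 ^ i.1) i.2 z := by
    obtain ⟨k, hk⟩ := exists_mem_Ico_zpow (half_pos (hpos z hz)) one_lt_two
    rw [zpow_add_one₀ two_ne_zero] at hk
    obtain ⟨y, hyS, hy⟩ := exists_infDist_div_four_lt_whitneyBump hne (hSnet k)
      (by linarith [hk.1]) (by linarith [hk.2])
    exact ⟨⟨k, y, hyS⟩, hy⟩
  refine ⟨Σ k, S k, inferInstance, fun i => whitneySet N (2 ^ i.1) i.2,
    fun i => whitneyBump N (2 ^ i.1) i.2, fun i => i.2, fun i => hSN i.1 i.2.2,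
    fun i z hz => dist_le_of_mem_whitneySet hz, fun i => whitneySet_subset_compl (by positivity),
    fun i => (isOpen_whitneySet ..).preimage continuous_subtype_val, fun z hz => ?_,
    fun z hz => ?_, fun i z _ => whitneyBump_nonneg .., fun i z w _ _ => ?_,
    fun i z _ hz => mem_whitneySet_of_whitneyBump_pos hz, hbump⟩
  · obtain ⟨i, hi⟩ := hbump z hz
    exact ⟨i, mem_whitneySet_of_whitneyBump_pos
      ((div_nonneg (hpos z hz).le four_pos.le).trans_lt hi)⟩
  · push_cast
    exact hdoub.encard_setOf_mem_whitneySet_le hSN hSsep (hpos z hz)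
  · simpa [Real.dist_eq] using (lipschitzWith_whitneyBump N _ _).dist_le_mul z w

/-- **Whitney-type partition data relative to a doubling closed subset.**
Let `(M, d)` be a metric space and `N ⊆ M` a nonempty closed subset which, with the induced
metric, has doubling constant `D ≥ 2`.  Then there are a countable index set `I`, a family
`(V_i)` of subsets of `M∖N`, functions `φ_i : M∖N → [0, ∞)` and points `x_i ∈ N` such that:
(1) `d(x_i, x) ≤ 7·d(x, N)` for all `x ∈ V_i`;
(2) each `V_i` is open in `M∖N`, the `V_i` cover `M∖N`, and each point of `M∖N` lies in at most
    `3D⁴` of the `V_i`;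
(3) each `φ_i` is `1`-Lipschitz with `{φ_i > 0} ⊆ V_i`;
(4) for every `x ∈ M∖N` there is `i` with `φ_i(x) > d(x, N)/4`. -/
theorem stmt3 (M : Type) [MetricSpace M] (N : Set M) (hne : N.Nonempty)
    (hcl : IsClosed N) (D : ℕ) (hD : 2 ≤ D) (hdoub : SubsetDoublingConstant N D) :
    ∃ (I : Type) (_ : Countable I) (V : I → Set M) (φ : I → M → ℝ) (x : I → M),
      (∀ i, x i ∈ N) ∧
      (∀ i, ∀ z ∈ V i, dist (x i) z ≤ 7 * Metric.infDist z N) ∧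
      (∀ i, V i ⊆ Nᶜ) ∧
      (∀ i, IsOpen (Subtype.val ⁻¹' (V i) : Set {z : M // z ∉ N})) ∧
      (∀ z : M, z ∉ N → ∃ i, z ∈ V i) ∧
      (∀ z : M, z ∉ N → {i : I | z ∈ V i}.encard ≤ ((3 * D ^ 4 : ℕ) : ℕ∞)) ∧
      (∀ i, ∀ z : M, z ∉ N → 0 ≤ φ i z) ∧
      (∀ i, ∀ z w : M, z ∉ N → w ∉ N → |φ i z - φ i w| ≤ dist z w) ∧
      (∀ i, ∀ z : M, z ∉ N → 0 < φ i z → z ∈ V i) ∧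
      (∀ z : M, z ∉ N → ∃ i, Metric.infDist z N / 4 < φ i z) :=
  stmt3_general M N hne hcl D hdoub
end

section
/- Let (M, d) be a metric space and let N ⊆ M be a nonempty closed subset which, as a metric space with the induced metric, has doubling constant D ≥ 2. Then there exist a countable index set I, a family (ψ_i)_{i ∈ I} of functions ψ_i : M∖N → [0,1], and points (x_i)_{i ∈ I} in N such that: (1) ∑_{i ∈ I} ψ_i(x) = 1 for every x ∈ M∖N; (2) for every x ∈ M∖N the set {i ∈ I : ψ_i(x) > 0} has at most 3D⁴ elements; (3) whenever ψ_i(x) > 0 one has d(x_i, x) ≤ 7·d(x, N); and (4) for every p ∈ (0,1] and all x, y ∈ M∖N, ∑_{i ∈ I} |ψ_i(x) − ψ_i(y)|^p ≤ 6·8^p·D⁴·d(x, y)^p / max(d(x, N), d(y, N))^p. -/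
/-!
For each `k ∈ ℤ` fix a maximal `2 ^ k`-separated subset of `N`. A point `y` of the scale-`k` net
carries the bump `x ↦ w_k(d(x, N)) ⬝ χ(d(x, y) / 2 ^ k)`: the scale weights `w_k` form a
partition of unity on `(0, ∞)` with `w_k` living where `d(x, N) ≈ 2 ^ k`, and the cutoff `χ` is
`1` on `[0, 3]` and `0` beyond `7/2`. Since the nets are `2 ^ k`-dense in `N`, the bumps add up to
at least `1` off `N`, and `ψ` is their normalisation. Only two scales are active at `x`, and at
each of them the doubling condition, applied four times to a ball of radius `8 ⬝ 2 ^ k` around a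
point of `N` near `x`, leaves at most `D ^ 4` net points; so at most `2 D⁴` functions are
positive at `x`.

For the Hölder bound let `R = max (d(z, N)) (d(w, N))`. If `R ≤ 8 d(z, w)` it is enough to count
the at most `4 D⁴` nonzero terms. Otherwise only scales with `2 ^ k > 7R/16` occur, a bump of
scale `k` is `5 / 2 ^ k`-Lipschitz, and a geometric series bounds the `ℓ¹` distance of the bump
vectors, hence of their normalisations, by `(320/7) D⁴ d(z, w) / R`; concavity of `t ↦ t ^ p`
turns this into the `ℓ ^ p` bound.
-/

open Metric Set

noncomputable def ramp (t : ℝ) : ℝ := projIcc 0 1 zero_le_one t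

lemma ramp_nonneg (t : ℝ) : 0 ≤ ramp t := (projIcc 0 1 zero_le_one t).2.1

lemma ramp_le_one (t : ℝ) : ramp t ≤ 1 := (projIcc 0 1 zero_le_one t).2.2

lemma ramp_of_nonpos {t : ℝ} (h : t ≤ 0) : ramp t = 0 := by
  simp [ramp, projIcc_of_le_left _ h]

lemma ramp_of_one_le {t : ℝ} (h : 1 ≤ t) : ramp t = 1 := by
  simp [ramp, projIcc_of_right_le _ h]

lemma abs_ramp_sub_ramp_le (u v : ℝ) : |ramp u - ramp v| ≤ |u - v| :=
  abs_projIcc_sub_projIcc zero_le_one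

lemma two_zpow_pos (k : ℤ) : (0 : ℝ) < 2 ^ k := zpow_pos two_pos k

lemma zpow_log_two_le {s : ℝ} (hs : 0 < s) : (2 : ℝ) ^ Int.log 2 s ≤ s := by
  simpa using Int.zpow_log_le_self (b := 2) one_lt_two hs

lemma lt_two_mul_zpow_log_two (s : ℝ) : s < 2 * 2 ^ Int.log 2 s := by
  simpa [zpow_add_one₀, mul_comm] using Int.lt_zpow_succ_log_self (b := 2) one_lt_two s

/-- Consecutive scales telescope, which makes these weights a partition of unity on `(0, ∞)`. -/
noncomputable def scaleWeight (k : ℤ) (s : ℝ) : ℝ :=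
  ramp (2 * (s / 2 ^ k) - 1) - ramp (s / 2 ^ k - 1)

lemma scaleWeight_nonneg (k : ℤ) {s : ℝ} (hs : 0 ≤ s) : 0 ≤ scaleWeight k s := by
  have : s / 2 ^ k - 1 ≤ 2 * (s / 2 ^ k) - 1 := by
    linarith [div_nonneg hs (two_zpow_pos k).le]
  exact sub_nonneg.2 (monotone_projIcc _ this)

lemma scaleWeight_le_one (k : ℤ) (s : ℝ) : scaleWeight k s ≤ 1 := by
  rw [scaleWeight]; linarith [ramp_le_one (2 * (s / 2 ^ k) - 1), ramp_nonneg (s / 2 ^ k - 1)]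

lemma scaleWeight_ne_zero {k : ℤ} {s : ℝ} (h : scaleWeight k s ≠ 0) :
    2 ^ k < 2 * s ∧ s < 2 * 2 ^ k := by
  have hk := two_zpow_pos k
  constructor <;> by_contra! hc <;> apply h
  · have : s / 2 ^ k ≤ 1 / 2 := by rw [div_le_iff₀ hk]; linarith
    rw [scaleWeight, ramp_of_nonpos (by linarith), ramp_of_nonpos (by linarith), sub_self]
  · have : 2 ≤ s / 2 ^ k := by rw [le_div_iff₀ hk]; linarith
    rw [scaleWeight, ramp_of_one_le (by linarith), ramp_of_one_le (by linarith), sub_self]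

lemma eq_log_or_eq_log_add_one_of_scaleWeight_ne_zero {k : ℤ} {s : ℝ}
    (h : scaleWeight k s ≠ 0) : k = Int.log 2 s ∨ k = Int.log 2 s + 1 := by
  obtain ⟨h₁, h₂⟩ := scaleWeight_ne_zero h
  have hs : 0 < s := by linarith [two_zpow_pos k]
  have : Int.log 2 s < k + 1 := (Int.lt_zpow_iff_log_lt one_lt_two hs).1 <| by
    push_cast; rw [zpow_add_one₀ two_ne_zero]; linarith
  have : k - 1 ≤ Int.log 2 s := (Int.zpow_le_iff_le_log one_lt_two hs).1 <| by
    push_cast; rw [zpow_sub_one₀ two_ne_zero]; linarith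
  omega

lemma scaleWeight_log_add_scaleWeight_log_add_one {s : ℝ} (hs : 0 < s) :
    scaleWeight (Int.log 2 s) s + scaleWeight (Int.log 2 s + 1) s = 1 := by
  set L := Int.log 2 s
  have hL : 1 ≤ s / 2 ^ L := (one_le_div (two_zpow_pos L)).2 (zpow_log_two_le hs)
  have hL' : s / 2 ^ (L + 1) < 1 := by
    rw [div_lt_one (two_zpow_pos _), zpow_add_one₀ two_ne_zero, mul_comm]
    exact lt_two_mul_zpow_log_two s
  have e : 2 * (s / 2 ^ (L + 1)) = s / 2 ^ L := by
    rw [zpow_add_one₀ two_ne_zero]; field_simp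
  rw [scaleWeight, scaleWeight, e, ramp_of_one_le (t := 2 * (s / 2 ^ L) - 1) (by linarith),
    ramp_of_nonpos (t := s / 2 ^ (L + 1) - 1) (by linarith)]
  ring

lemma abs_scaleWeight_sub_le (k : ℤ) (u v : ℝ) :
    |scaleWeight k u - scaleWeight k v| ≤ 3 * |u - v| / 2 ^ k := by
  have e : |u / 2 ^ k - v / 2 ^ k| = |u - v| / 2 ^ k := by
    rw [← sub_div, abs_div, abs_of_pos (two_zpow_pos k)]
  have h₁ := abs_ramp_sub_ramp_le (2 * (u / 2 ^ k) - 1) (2 * (v / 2 ^ k) - 1)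
  have h₂ := abs_ramp_sub_ramp_le (u / 2 ^ k - 1) (v / 2 ^ k - 1)
  rw [show 2 * (u / 2 ^ k) - 1 - (2 * (v / 2 ^ k) - 1) = 2 * (u / 2 ^ k - v / 2 ^ k) by ring,
    abs_mul, abs_two, e] at h₁
  rw [sub_sub_sub_cancel_right, e] at h₂
  calc |scaleWeight k u - scaleWeight k v|
      ≤ |ramp (2 * (u / 2 ^ k) - 1) - ramp (2 * (v / 2 ^ k) - 1)|
        + |ramp (u / 2 ^ k - 1) - ramp (v / 2 ^ k - 1)| := by
        rw [scaleWeight, scaleWeight, sub_sub_sub_comm]; exact abs_sub _ _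
    _ ≤ 2 * (|u - v| / 2 ^ k) + |u - v| / 2 ^ k := add_le_add h₁ h₂
    _ = 3 * |u - v| / 2 ^ k := by ring

lemma Finset.sum_inv_two_zpow_le (K : Finset ℤ) {m : ℤ} (hK : ∀ k ∈ K, m ≤ k) :
    ∑ k ∈ K, ((2 : ℝ) ^ k)⁻¹ ≤ 2 * ((2 : ℝ) ^ m)⁻¹ := by
  induction K using Finset.induction_on_min generalizing m with
  | empty => simp only [Finset.sum_empty]; positivity
  | insert a K ha ih =>
    have hm : m ≤ a := hK a (Finset.mem_insert_self a K)
    rw [Finset.sum_insert fun h => (ha a h).false]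
    calc ((2 : ℝ) ^ a)⁻¹ + ∑ k ∈ K, ((2 : ℝ) ^ k)⁻¹
        ≤ ((2 : ℝ) ^ a)⁻¹ + 2 * ((2 : ℝ) ^ (a + 1))⁻¹ := by
          gcongr; exact ih fun k hk => Int.add_one_le_of_lt (ha k hk)
      _ = 2 * ((2 : ℝ) ^ a)⁻¹ := by rw [zpow_add_one₀ two_ne_zero]; ring
      _ ≤ 2 * ((2 : ℝ) ^ m)⁻¹ := by gcongr; exact one_le_two

lemma Finset.sum_inv_two_zpow_le_of_lt (K : Finset ℤ) {c : ℝ} (hc : 0 < c)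
    (hK : ∀ k ∈ K, c < 2 ^ k) : ∑ k ∈ K, ((2 : ℝ) ^ k)⁻¹ ≤ 2 / c := by
  have hm : ∀ k ∈ K, Int.log 2 c + 1 ≤ k := fun k hk =>
    (Int.lt_zpow_iff_log_lt one_lt_two hc).1 (by exact_mod_cast hK k hk)
  calc ∑ k ∈ K, ((2 : ℝ) ^ k)⁻¹ ≤ 2 * ((2 : ℝ) ^ (Int.log 2 c + 1))⁻¹ :=
        sum_inv_two_zpow_le K hm
    _ ≤ 2 * c⁻¹ := by
      gcongr
      exact_mod_cast (Int.lt_zpow_succ_log_self one_lt_two c).le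
    _ = 2 / c := by ring

lemma Finset.sum_rpow_le_card_rpow_mul_rpow_sum {ι : Type*} (s : Finset ι) {f : ι → ℝ}
    (hf : ∀ i ∈ s, 0 ≤ f i) {p : ℝ} (hp₀ : 0 ≤ p) (hp₁ : p ≤ 1) :
    ∑ i ∈ s, f i ^ p ≤ (s.card : ℝ) ^ (1 - p) * (∑ i ∈ s, f i) ^ p := by
  rcases s.eq_empty_or_nonempty with rfl | hs
  · simp only [Finset.sum_empty]; positivity
  have hn : (0 : ℝ) < s.card := by exact_mod_cast hs.card_pos
  have jensen := (Real.concaveOn_rpow hp₀ hp₁).le_map_sum (t := s)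
    (w := fun _ => (s.card : ℝ)⁻¹) (p := f) (fun _ _ => by positivity) (by simp [hn.ne']) hf
  simp only [smul_eq_mul, ← Finset.mul_sum] at jensen
  rw [Real.mul_rpow (by positivity) (Finset.sum_nonneg hf), Real.inv_rpow hn.le,
    inv_mul_le_iff₀ hn, ← mul_assoc, ← div_eq_mul_inv] at jensen
  rwa [Real.rpow_sub hn, Real.rpow_one]

lemma Finset.sum_abs_div_sum_sub_div_sum_le {ι : Type*} (s : Finset ι) (a b : ι → ℝ)
    (hb : ∀ i ∈ s, 0 ≤ b i) (ha : 0 < ∑ i ∈ s, a i) (hb' : 0 < ∑ i ∈ s, b i) :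
    ∑ i ∈ s, |a i / ∑ j ∈ s, a j - b i / ∑ j ∈ s, b j| ≤
      2 * (∑ i ∈ s, |a i - b i|) / ∑ i ∈ s, a i := by
  set A := ∑ j ∈ s, a j
  set B := ∑ j ∈ s, b j
  have hsplit : ∀ i ∈ s,
      |a i / A - b i / B| ≤ |a i - b i| / A + b i * (|A - B| / (A * B)) := by
    intro i hi
    have e : a i / A - b i / B = (a i - b i) / A + b i * ((B - A) / (A * B)) := by
      field_simp; ring
    rw [e]
    refine (abs_add_le _ _).trans (le_of_eq ?_)
    rw [abs_div, abs_of_pos ha, abs_mul, abs_of_nonneg (hb i hi), abs_div,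
      abs_of_pos (mul_pos ha hb'), abs_sub_comm B]
  have hAB : |A - B| ≤ ∑ i ∈ s, |a i - b i| := by
    rw [← Finset.sum_sub_distrib]; exact Finset.abs_sum_le_sum_abs _ _
  calc ∑ i ∈ s, |a i / A - b i / B|
      ≤ ∑ i ∈ s, (|a i - b i| / A + b i * (|A - B| / (A * B))) := Finset.sum_le_sum hsplit
    _ = (∑ i ∈ s, |a i - b i| + |A - B|) / A := by
      rw [Finset.sum_add_distrib, ← Finset.sum_div, ← Finset.sum_mul]
      change _ + B * _ = _
      field_simp
    _ ≤ 2 * (∑ i ∈ s, |a i - b i|) / A := by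
      gcongr; linarith

section

variable {M : Type*} [MetricSpace M] {N : Set M} {D : ℕ}

lemma SubsetDoublingConstant.encard_le_pow (hN : SubsetDoublingConstant N D) (j : ℕ) {c : M}
    (hc : c ∈ N) {ρ : ℝ} (hρ : 0 < ρ) {S : Set M} (hSN : S ⊆ N)
    (hS : S ⊆ closedBall c ρ) (hsep : S.Pairwise fun a b => 2 * ρ / 2 ^ j < dist a b) :
    S.encard ≤ D ^ j := by
  induction j generalizing c ρ S with
  | zero =>
    rw [pow_zero, encard_le_one_iff]
    refine fun a b ha hb => by_contra fun hab => (hsep ha hb hab).not_ge ?_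
    have ha' := mem_closedBall.1 (hS ha)
    have hb' := mem_closedBall.1 (hS hb)
    linarith [dist_triangle_right a b c]
  | succ j ih =>
    obtain ⟨T, hTN, hTD, hT⟩ := hN c hc ρ hρ
    have hST : S = ⋃ t ∈ T, S ∩ closedBall t (ρ / 2) := by
      rw [← inter_iUnion₂, inter_eq_left.2 fun x hx => hT ⟨hSN hx, hS hx⟩]
    calc S.encard ≤ ∑ t ∈ T, (S ∩ closedBall t (ρ / 2)).encard := by
          conv_lhs => rw [hST]
          exact T.set_encard_biUnion_le _
      _ ≤ ∑ _t ∈ T, (D : ℕ∞) ^ j := by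
          refine Finset.sum_le_sum fun t ht => ih (hTN ht) (half_pos hρ)
            (inter_subset_left.trans hSN) inter_subset_right fun a ha b hb hab => ?_
          refine lt_of_eq_of_lt ?_ (hsep ha.1 hb.1 hab)
          rw [pow_succ]; field_simp
      _ ≤ D ^ (j + 1) := by
          rw [Finset.sum_const, nsmul_eq_mul, pow_succ']
          gcongr

lemma SubsetDoublingConstant.countable_of_pairwise (hN : SubsetDoublingConstant N D)
    {Y : Set M} (hYN : Y ⊆ N) {ε : ℝ} (hε : 0 < ε)
    (hsep : Y.Pairwise fun a b => ε < dist a b) : Y.Countable := by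
  rcases Y.eq_empty_or_nonempty with rfl | ⟨y, hy⟩
  · exact countable_empty
  rw [← iUnion_inter_closedBall_nat Y y]
  refine countable_iUnion fun n => Set.Finite.countable ?_
  obtain ⟨j, hj⟩ := pow_unbounded_of_one_lt (2 * (n + 1) / ε) one_lt_two
  rw [← encard_lt_top_iff]
  refine (hN.encard_le_pow j (hYN hy) (ρ := n + 1) (by positivity) (inter_subset_left.trans hYN)
    (inter_subset_right.trans (closedBall_subset_closedBall (by linarith))) fun a ha b hb hab =>
      lt_trans ?_ (hsep ha.1 hb.1 hab)).trans_lt (by exact_mod_cast ENat.natCast_lt_top (D ^ j))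
  rw [div_lt_iff₀ hε] at hj
  rw [div_lt_iff₀ (by positivity)]
  linarith

lemma exists_pairwise_lt_dist_forall_exists_dist_le (s : Set M) {ε : ℝ} (hε : 0 ≤ ε) :
    ∃ Y ⊆ s, (Y.Pairwise fun a b => ε < dist a b) ∧
      ∀ x ∈ s, ∃ y ∈ Y, dist x y ≤ ε := by
  obtain ⟨Y, -, hY⟩ := zorn_subset_nonempty
    {Y | Y ⊆ s ∧ Y.Pairwise fun a b => ε < dist a b}
    (fun c hc hchain _ => ⟨⋃₀ c, ⟨sUnion_subset fun Y hY => (hc hY).1,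
      hchain.pairwise_sUnion.2 fun Y hY => (hc hY).2⟩, fun _ => subset_sUnion_of_mem⟩)
    ∅ ⟨empty_subset s, pairwise_empty _⟩
  refine ⟨Y, hY.prop.1, hY.prop.2, fun x hx => by_contra fun hfar => ?_⟩
  push Not at hfar
  have hxY : x ∉ Y := fun h => (hfar x h).not_ge (dist_self x ▸ hε)
  refine hxY (hY.mem_of_prop_insert ⟨insert_subset hx hY.prop.1, ?_⟩)
  exact hY.prop.2.insert fun y hy _ => ⟨hfar y hy, dist_comm x y ▸ hfar y hy⟩

structure DyadicNets (N : Set M) where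
  net : ℤ → Set M
  net_subset (k : ℤ) : net k ⊆ N
  lt_dist (k : ℤ) : (net k).Pairwise fun a b => (2 : ℝ) ^ k < dist a b
  exists_dist_le (k : ℤ) : ∀ x ∈ N, ∃ y ∈ net k, dist x y ≤ (2 : ℝ) ^ k

namespace DyadicNets

lemma nonempty (N : Set M) : Nonempty (DyadicNets N) := by
  choose Y hYN hsep hcov using fun k : ℤ =>
    exists_pairwise_lt_dist_forall_exists_dist_le N (two_zpow_pos k).le
  exact ⟨⟨Y, hYN, hsep, hcov⟩⟩

variable (Y : DyadicNets N)

abbrev Index : Type _ := Σ k : ℤ, Y.net k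

lemma countable_index (hN : SubsetDoublingConstant N D) : Countable Y.Index :=
  have := fun k =>
    (hN.countable_of_pairwise (Y.net_subset k) (two_zpow_pos k) (Y.lt_dist k)).to_subtype
  inferInstance

noncomputable def bump (i : Y.Index) (x : M) : ℝ :=
  scaleWeight i.1 (infDist x N) * ramp (7 - 2 * (dist x i.2 / 2 ^ i.1))

noncomputable def bumpSum (x : M) : ℝ := ∑ᶠ i, Y.bump i x

noncomputable def partition (i : Y.Index) (x : M) : ℝ := Y.bump i x / Y.bumpSum x

variable {Y}

lemma bump_nonneg (i : Y.Index) (x : M) : 0 ≤ Y.bump i x :=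
  mul_nonneg (scaleWeight_nonneg _ infDist_nonneg) (ramp_nonneg _)

lemma bump_le_one (i : Y.Index) (x : M) : Y.bump i x ≤ 1 :=
  mul_le_one₀ (scaleWeight_le_one _ _) (ramp_nonneg _) (ramp_le_one _)

lemma scaleWeight_ne_zero_of_bump_ne_zero {i : Y.Index} {x : M} (h : Y.bump i x ≠ 0) :
    scaleWeight i.1 (infDist x N) ≠ 0 :=
  left_ne_zero_of_mul h

lemma two_zpow_lt_of_bump_ne_zero {i : Y.Index} {x : M} (h : Y.bump i x ≠ 0) :
    2 ^ i.1 < 2 * infDist x N :=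
  (scaleWeight_ne_zero (scaleWeight_ne_zero_of_bump_ne_zero h)).1

lemma infDist_lt_of_bump_ne_zero {i : Y.Index} {x : M} (h : Y.bump i x ≠ 0) :
    infDist x N < 2 * 2 ^ i.1 :=
  (scaleWeight_ne_zero (scaleWeight_ne_zero_of_bump_ne_zero h)).2

lemma dist_lt_of_bump_ne_zero {i : Y.Index} {x : M} (h : Y.bump i x ≠ 0) :
    dist x i.2 < 7 / 2 * 2 ^ i.1 := by
  have hpos : 0 < 7 - 2 * (dist x i.2 / 2 ^ i.1) := by
    by_contra! hc
    exact right_ne_zero_of_mul h (ramp_of_nonpos hc)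
  exact (div_lt_iff₀ (two_zpow_pos i.1)).1 (by linarith)

lemma abs_bump_sub_bump_le (i : Y.Index) (z w : M) :
    |Y.bump i z - Y.bump i w| ≤ 5 * dist z w / 2 ^ i.1 := by
  have hk := two_zpow_pos i.1
  set a := scaleWeight i.1 (infDist z N)
  set a' := scaleWeight i.1 (infDist w N)
  set b := ramp (7 - 2 * (dist z i.2 / 2 ^ i.1))
  set b' := ramp (7 - 2 * (dist w i.2 / 2 ^ i.1))
  have ha : |a - a'| ≤ 3 * dist z w / 2 ^ i.1 :=
    (abs_scaleWeight_sub_le _ _ _).trans <| by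
      gcongr; simpa [Real.dist_eq] using (lipschitz_infDist_pt N).dist_le_mul z w
  have hb : |b - b'| ≤ 2 * dist z w / 2 ^ i.1 := by
    refine (abs_ramp_sub_ramp_le _ _).trans ?_
    rw [show 7 - 2 * (dist z i.2 / 2 ^ i.1) - (7 - 2 * (dist w i.2 / 2 ^ i.1))
        = -(2 * (dist z i.2 - dist w i.2) / 2 ^ i.1) by ring,
      abs_neg, abs_div, abs_mul, abs_two, abs_of_pos hk]
    gcongr
    exact abs_dist_sub_le z w i.2
  have ha' : |a'| ≤ 1 := abs_le.2
    ⟨by linarith [scaleWeight_nonneg i.1 (infDist_nonneg (x := w) (s := N))],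
      scaleWeight_le_one _ _⟩
  have hb₁ : |b| ≤ 1 := abs_le.2 ⟨by linarith [ramp_nonneg (7 - 2 * (dist z i.2 / 2 ^ i.1))],
    ramp_le_one _⟩
  calc |Y.bump i z - Y.bump i w| = |(a - a') * b + a' * (b - b')| := by
        simp only [bump, a, a', b, b']; ring_nf
    _ ≤ |a - a'| * |b| + |a'| * |b - b'| := by
        rw [← abs_mul, ← abs_mul]; exact abs_add_le _ _
    _ ≤ 3 * dist z w / 2 ^ i.1 * 1 + 1 * (2 * dist z w / 2 ^ i.1) := by gcongr
    _ = 5 * dist z w / 2 ^ i.1 := by ring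

lemma encard_setOf_fst_eq_dist_le_le (hN : SubsetDoublingConstant N D) (hne : N.Nonempty)
    {x : M} {k : ℤ} {ρ : ℝ} (h : infDist x N + ρ < 8 * 2 ^ k) :
    {i : Y.Index | i.1 = k ∧ dist x i.2 ≤ ρ}.encard ≤ D ^ 4 := by
  obtain ⟨z, hzN, hz⟩ := (infDist_lt_iff hne).1 (lt_sub_iff_add_lt.2 h)
  have hsub : {i : Y.Index | i.1 = k ∧ dist x i.2 ≤ ρ} ⊆
      Sigma.mk k '' (Subtype.val ⁻¹' closedBall x ρ) := by
    rintro ⟨k, y⟩ ⟨rfl, hy⟩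
    exact ⟨y, mem_closedBall'.2 hy, rfl⟩
  have hball : Y.net k ∩ closedBall x ρ ⊆ closedBall z (8 * 2 ^ k) := fun y hy => by
    have := mem_closedBall.1 hy.2
    rw [mem_closedBall]
    linarith [dist_triangle y x z, dist_comm x z]
  calc _ ≤ (Sigma.mk k '' (Subtype.val ⁻¹' closedBall x ρ : Set (Y.net k))).encard :=
        encard_le_encard hsub
    _ ≤ (Subtype.val '' (Subtype.val ⁻¹' closedBall x ρ : Set (Y.net k))).encard := by
        rw [sigma_mk_injective.encard_image, Subtype.val_injective.encard_image]
    _ ≤ D ^ 4 := by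
        rw [Subtype.image_preimage_coe]
        refine hN.encard_le_pow 4 hzN (by positivity) (inter_subset_left.trans (Y.net_subset k))
          hball fun a ha b hb hab => lt_of_eq_of_lt ?_ (Y.lt_dist k ha.1 hb.1 hab)
        norm_num; ring

lemma encard_setOf_fst_eq_bump_ne_zero_le (hN : SubsetDoublingConstant N D) (hne : N.Nonempty)
    (x : M) (k : ℤ) : {i : Y.Index | i.1 = k ∧ Y.bump i x ≠ 0}.encard ≤ D ^ 4 := by
  by_cases hk : scaleWeight k (infDist x N) = 0
  · have : {i : Y.Index | i.1 = k ∧ Y.bump i x ≠ 0} = ∅ :=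
      eq_empty_of_forall_notMem fun i hi =>
        scaleWeight_ne_zero_of_bump_ne_zero hi.2 (by rw [hi.1]; exact hk)
    simp [this]
  have hsub : {i : Y.Index | i.1 = k ∧ Y.bump i x ≠ 0} ⊆
      {i | i.1 = k ∧ dist x i.2 ≤ 7 / 2 * 2 ^ k} := fun i hi =>
    ⟨hi.1, hi.1 ▸ (dist_lt_of_bump_ne_zero hi.2).le⟩
  refine (encard_le_encard hsub).trans (encard_setOf_fst_eq_dist_le_le hN hne ?_)
  linarith [(scaleWeight_ne_zero hk).2, two_zpow_pos k]

lemma encard_setOf_bump_ne_zero_le (hN : SubsetDoublingConstant N D) (hne : N.Nonempty)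
    (x : M) : {i : Y.Index | Y.bump i x ≠ 0}.encard ≤ 2 * D ^ 4 := by
  set L := Int.log 2 (infDist x N)
  have hsub : {i : Y.Index | Y.bump i x ≠ 0} ⊆
      {i | i.1 = L ∧ Y.bump i x ≠ 0} ∪ {i | i.1 = L + 1 ∧ Y.bump i x ≠ 0} := by
    intro i hi
    rcases eq_log_or_eq_log_add_one_of_scaleWeight_ne_zero
      (scaleWeight_ne_zero_of_bump_ne_zero hi) with h | h
    exacts [.inl ⟨h, hi⟩, .inr ⟨h, hi⟩]
  calc _ ≤ _ := encard_le_encard hsub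
    _ ≤ _ := encard_union_le _ _
    _ ≤ D ^ 4 + D ^ 4 := add_le_add (encard_setOf_fst_eq_bump_ne_zero_le hN hne x L)
        (encard_setOf_fst_eq_bump_ne_zero_le hN hne x (L + 1))
    _ = 2 * D ^ 4 := (two_mul _).symm

lemma finite_support_bump (hN : SubsetDoublingConstant N D) (hne : N.Nonempty) (x : M) :
    (Function.support fun i => Y.bump i x).Finite :=
  encard_lt_top_iff.1 <| (encard_setOf_bump_ne_zero_le hN hne x).trans_lt <| by
    exact_mod_cast ENat.natCast_lt_top (2 * D ^ 4)

lemma exists_bump_eq_scaleWeight (hne : N.Nonempty) {x : M} {k : ℤ}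
    (h : infDist x N < 2 * 2 ^ k) :
    ∃ y : Y.net k, Y.bump ⟨k, y⟩ x = scaleWeight k (infDist x N) := by
  obtain ⟨z, hzN, hz⟩ := (infDist_lt_iff hne).1 h
  obtain ⟨y, hyY, hy⟩ := Y.exists_dist_le k z hzN
  refine ⟨⟨y, hyY⟩, ?_⟩
  have : dist x y / 2 ^ k ≤ 3 := by
    rw [div_le_iff₀ (two_zpow_pos k)]; linarith [dist_triangle x z y]
  rw [bump, ramp_of_one_le (by linarith), mul_one]

lemma one_le_bumpSum (hN : SubsetDoublingConstant N D) (hne : N.Nonempty) {x : M}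
    (hx : 0 < infDist x N) : 1 ≤ Y.bumpSum x := by
  classical
  set L := Int.log 2 (infDist x N)
  have hL := lt_two_mul_zpow_log_two (infDist x N)
  obtain ⟨y₀, hy₀⟩ := Y.exists_bump_eq_scaleWeight hne hL
  obtain ⟨y₁, hy₁⟩ := Y.exists_bump_eq_scaleWeight hne (k := L + 1) <| by
    rw [zpow_add_one₀ two_ne_zero]; linarith [two_zpow_pos L]
  set F := (finite_support_bump hN hne x).toFinset ∪ {⟨L, y₀⟩, ⟨L + 1, y₁⟩}
  rw [bumpSum, finsum_eq_sum_of_support_subset _ (s := F) fun i hi =>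
    Finset.mem_union_left _ ((finite_support_bump hN hne x).mem_toFinset.2 hi)]
  calc 1 = Y.bump ⟨L, y₀⟩ x + Y.bump ⟨L + 1, y₁⟩ x := by
        rw [hy₀, hy₁, scaleWeight_log_add_scaleWeight_log_add_one hx]
    _ = ∑ i ∈ {⟨L, y₀⟩, ⟨L + 1, y₁⟩}, Y.bump i x :=
        (Finset.sum_pair (f := fun i => Y.bump i x) fun h =>
          (Int.lt_succ L).ne (congrArg Sigma.fst h)).symm
    _ ≤ ∑ i ∈ F, Y.bump i x :=
        Finset.sum_le_sum_of_subset_of_nonneg Finset.subset_union_right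
          fun i _ _ => bump_nonneg i x

lemma partition_nonneg (i : Y.Index) (x : M) : 0 ≤ Y.partition i x :=
  div_nonneg (bump_nonneg i x) (finsum_nonneg fun i => bump_nonneg i x)

lemma partition_le_one (hN : SubsetDoublingConstant N D) (hne : N.Nonempty) (i : Y.Index)
    {x : M} (hx : 0 < infDist x N) : Y.partition i x ≤ 1 :=
  div_le_one_of_le₀ ((bump_le_one i x).trans (one_le_bumpSum hN hne hx))
    (finsum_nonneg fun i => bump_nonneg i x)

lemma partition_pos_iff (hN : SubsetDoublingConstant N D) (hne : N.Nonempty) (i : Y.Index)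
    {x : M} (hx : 0 < infDist x N) : 0 < Y.partition i x ↔ Y.bump i x ≠ 0 := by
  rw [partition, div_pos_iff_of_pos_right (one_pos.trans_le (one_le_bumpSum hN hne hx)),
    (bump_nonneg i x).lt_iff_ne, ne_comm]

lemma finsum_partition (hN : SubsetDoublingConstant N D) (hne : N.Nonempty) {x : M}
    (hx : 0 < infDist x N) : ∑ᶠ i, Y.partition i x = 1 := by
  simp only [partition, div_eq_mul_inv, ← finsum_mul]
  exact mul_inv_cancel₀ (one_pos.trans_le (one_le_bumpSum hN hne hx)).ne'

lemma encard_setOf_partition_pos_le (hN : SubsetDoublingConstant N D) (hne : N.Nonempty)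
    {x : M} (hx : 0 < infDist x N) :
    {i : Y.Index | 0 < Y.partition i x}.encard ≤ 2 * D ^ 4 := by
  simpa only [partition_pos_iff hN hne _ hx] using encard_setOf_bump_ne_zero_le hN hne x

lemma dist_le_of_partition_pos (hN : SubsetDoublingConstant N D) (hne : N.Nonempty)
    {i : Y.Index} {x : M} (hx : 0 < infDist x N) (h : 0 < Y.partition i x) :
    dist (i.2 : M) x ≤ 7 * infDist x N := by
  have hbump := (partition_pos_iff hN hne i hx).1 h
  rw [dist_comm]
  linarith [dist_lt_of_bump_ne_zero hbump, two_zpow_lt_of_bump_ne_zero hbump]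

section Active

variable {z w : M} {F : Finset Y.Index}

lemma exists_finset_active (hN : SubsetDoublingConstant N D) (hne : N.Nonempty) (z w : M) :
    ∃ F : Finset Y.Index, (∀ i, i ∈ F ↔ Y.bump i z ≠ 0 ∨ Y.bump i w ≠ 0) ∧
      (F.card : ℝ) ≤ 4 * D ^ 4 := by
  have hfin : ({i | Y.bump i z ≠ 0} ∪ {i | Y.bump i w ≠ 0}).Finite :=
    (finite_support_bump hN hne z).union (finite_support_bump hN hne w)
  refine ⟨hfin.toFinset, fun i => by simp, ?_⟩
  have := (encard_union_le _ _).trans (add_le_add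
    (encard_setOf_bump_ne_zero_le (Y := Y) hN hne z) (encard_setOf_bump_ne_zero_le hN hne w))
  rw [hfin.encard_eq_coe_toFinset_card] at this
  have : hfin.toFinset.card ≤ 2 * D ^ 4 + 2 * D ^ 4 := by exact_mod_cast this
  exact_mod_cast (by omega : hfin.toFinset.card ≤ 4 * D ^ 4)

lemma card_filter_fst_eq_le (hN : SubsetDoublingConstant N D) (hne : N.Nonempty)
    (hF : ∀ i ∈ F, Y.bump i z ≠ 0 ∨ Y.bump i w ≠ 0) {k : ℤ}
    (hk : infDist z N + dist z w < 9 / 2 * 2 ^ k) : (F.filter (·.1 = k)).card ≤ D ^ 4 := by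
  have hsub : (F.filter (·.1 = k) : Set Y.Index) ⊆
      {i | i.1 = k ∧ dist z i.2 ≤ 7 / 2 * 2 ^ k + dist z w} := by
    intro i hi
    obtain ⟨hiF, rfl⟩ := Finset.mem_filter.1 hi
    refine ⟨rfl, ?_⟩
    rcases hF i hiF with h | h
    · linarith [dist_lt_of_bump_ne_zero h, dist_nonneg (x := z) (y := w)]
    · linarith [dist_lt_of_bump_ne_zero h, dist_triangle z w i.2]
  have := (encard_le_encard hsub).trans (encard_setOf_fst_eq_dist_le_le hN hne (by linarith))
  rw [encard_coe_eq_coe_finsetCard] at this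
  exact_mod_cast this

lemma sum_abs_bump_sub_bump_le (hN : SubsetDoublingConstant N D) (hne : N.Nonempty)
    (hd : 8 * dist z w < infDist z N)
    (hF : ∀ i ∈ F, Y.bump i z ≠ 0 ∨ Y.bump i w ≠ 0) :
    ∑ i ∈ F, |Y.bump i z - Y.bump i w| ≤ 160 / 7 * D ^ 4 * dist z w / infDist z N := by
  classical
  have hR : 0 < infDist z N := by linarith [dist_nonneg (x := z) (y := w)]
  have hscale : ∀ k ∈ F.image Sigma.fst, 7 * infDist z N / 16 < 2 ^ k := by
    intro k hk
    obtain ⟨i, hi, rfl⟩ := Finset.mem_image.1 hk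
    rcases hF i hi with h | h
    · linarith [infDist_lt_of_bump_ne_zero h]
    · linarith [infDist_lt_of_bump_ne_zero h,
        infDist_le_infDist_add_dist (x := z) (y := w) (s := N)]
  calc ∑ i ∈ F, |Y.bump i z - Y.bump i w|
      = ∑ k ∈ F.image Sigma.fst, ∑ i ∈ F.filter (·.1 = k), |Y.bump i z - Y.bump i w| :=
        (Finset.sum_fiberwise_of_maps_to (fun i hi => Finset.mem_image_of_mem _ hi) _).symm
    _ ≤ ∑ k ∈ F.image Sigma.fst, D ^ 4 * (5 * dist z w * ((2 : ℝ) ^ k)⁻¹) := by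
        refine Finset.sum_le_sum fun k hk => ?_
        refine (Finset.sum_le_card_nsmul _ _ (5 * dist z w * ((2 : ℝ) ^ k)⁻¹)
          fun i hi => ?_).trans ?_
        · rw [← (Finset.mem_filter.1 hi).2, ← div_eq_mul_inv]
          exact abs_bump_sub_bump_le i z w
        · rw [nsmul_eq_mul]
          gcongr
          exact_mod_cast card_filter_fst_eq_le hN hne hF (by linarith [hscale k hk])
    _ = 5 * D ^ 4 * dist z w * ∑ k ∈ F.image Sigma.fst, ((2 : ℝ) ^ k)⁻¹ := by
        rw [Finset.mul_sum]; congr 1 with k; ring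
    _ ≤ 5 * D ^ 4 * dist z w * (2 / (7 * infDist z N / 16)) := by
        gcongr
        exact Finset.sum_inv_two_zpow_le_of_lt _ (by positivity) hscale
    _ = 160 / 7 * D ^ 4 * dist z w / infDist z N := by field_simp; ring

lemma sum_abs_partition_sub_partition_le (hN : SubsetDoublingConstant N D) (hne : N.Nonempty)
    (hw : 0 < infDist w N) (hzw : infDist w N ≤ infDist z N) (hd : 8 * dist z w < infDist z N)
    (hF : ∀ i, i ∈ F ↔ Y.bump i z ≠ 0 ∨ Y.bump i w ≠ 0) :
    ∑ i ∈ F, |Y.partition i z - Y.partition i w| ≤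
      320 / 7 * D ^ 4 * dist z w / infDist z N := by
  have hzF : Y.bumpSum z = ∑ i ∈ F, Y.bump i z :=
    finsum_eq_sum_of_support_subset _ fun i hi => (hF i).2 (.inl hi)
  have hwF : Y.bumpSum w = ∑ i ∈ F, Y.bump i w :=
    finsum_eq_sum_of_support_subset _ fun i hi => (hF i).2 (.inr hi)
  have hz₁ := hzF ▸ one_le_bumpSum hN hne (hw.trans_le hzw)
  have hw₁ := hwF ▸ one_le_bumpSum hN hne hw
  calc ∑ i ∈ F, |Y.partition i z - Y.partition i w|
      = ∑ i ∈ F,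
          |Y.bump i z / ∑ j ∈ F, Y.bump j z - Y.bump i w / ∑ j ∈ F, Y.bump j w| := by
        simp only [partition, hzF, hwF]
    _ ≤ 2 * (∑ i ∈ F, |Y.bump i z - Y.bump i w|) / ∑ i ∈ F, Y.bump i z :=
        F.sum_abs_div_sum_sub_div_sum_le _ _ (fun i _ => bump_nonneg i w) (by linarith)
          (by linarith)
    _ ≤ 2 * (∑ i ∈ F, |Y.bump i z - Y.bump i w|) := div_le_self (by positivity) hz₁
    _ ≤ 2 * (160 / 7 * D ^ 4 * dist z w / infDist z N) := by
        gcongr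
        exact sum_abs_bump_sub_bump_le hN hne hd fun i hi => (hF i).1 hi
    _ = 320 / 7 * D ^ 4 * dist z w / infDist z N := by ring

lemma sum_abs_partition_sub_rpow_le_of_le (hN : SubsetDoublingConstant N D) (hne : N.Nonempty)
    (hw : 0 < infDist w N) (hzw : infDist w N ≤ infDist z N) (hd : infDist z N ≤ 8 * dist z w)
    (hcard : (F.card : ℝ) ≤ 4 * D ^ 4) {p : ℝ} (hp₀ : 0 < p) :
    ∑ i ∈ F, |Y.partition i z - Y.partition i w| ^ p ≤
      6 * 8 ^ p * D ^ 4 * dist z w ^ p / infDist z N ^ p := by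
  have hz : 0 < infDist z N := hw.trans_le hzw
  have h8 : 0 ≤ 8 ^ p * (dist z w ^ p / infDist z N ^ p) * D ^ 4 := by positivity
  calc ∑ i ∈ F, |Y.partition i z - Y.partition i w| ^ p ≤ ∑ _i ∈ F, (1 : ℝ) := by
        refine Finset.sum_le_sum fun i _ => Real.rpow_le_one (abs_nonneg _) ?_ hp₀.le
        rw [abs_sub_le_iff]
        constructor <;> linarith [partition_nonneg (Y := Y) i z, partition_nonneg (Y := Y) i w,
          partition_le_one (Y := Y) hN hne i hz, partition_le_one (Y := Y) hN hne i hw]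
    _ ≤ 4 * D ^ 4 * (8 * (dist z w / infDist z N)) ^ p := by
        rw [Finset.sum_const, nsmul_one]
        refine hcard.trans (le_mul_of_one_le_right (by positivity) (Real.one_le_rpow ?_ hp₀.le))
        rwa [← mul_div_assoc, one_le_div hz]
    _ ≤ 6 * 8 ^ p * D ^ 4 * dist z w ^ p / infDist z N ^ p := by
        rw [Real.mul_rpow (by norm_num) (by positivity), Real.div_rpow dist_nonneg hz.le,
          mul_div_assoc]
        linarith

lemma sum_abs_partition_sub_rpow_le_of_lt (hN : SubsetDoublingConstant N D) (hne : N.Nonempty)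
    (hw : 0 < infDist w N) (hzw : infDist w N ≤ infDist z N) (hd : 8 * dist z w < infDist z N)
    (hF : ∀ i, i ∈ F ↔ Y.bump i z ≠ 0 ∨ Y.bump i w ≠ 0)
    (hcard : (F.card : ℝ) ≤ 4 * D ^ 4) {p : ℝ} (hp₀ : 0 < p) (hp₁ : p ≤ 1) :
    ∑ i ∈ F, |Y.partition i z - Y.partition i w| ^ p ≤
      6 * 8 ^ p * D ^ 4 * dist z w ^ p / infDist z N ^ p := by
  have hz : 0 < infDist z N := hw.trans_le hzw
  have hX : (0 : ℝ) ≤ 4 * D ^ 4 := by positivity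
  have h8 : 0 ≤ 8 ^ p * (dist z w ^ p / infDist z N ^ p) * D ^ 4 := by positivity
  have hpow : (80 / 7 * (dist z w / infDist z N)) ^ p
      = (10 / 7) ^ p * 8 ^ p * (dist z w ^ p / infDist z N ^ p) := by
    rw [show (80 : ℝ) / 7 * (dist z w / infDist z N) = 10 / 7 * 8 * (dist z w / infDist z N) by
      ring, Real.mul_rpow (by positivity) (by positivity),
      Real.mul_rpow (by positivity) (by positivity), Real.div_rpow dist_nonneg hz.le]
  calc ∑ i ∈ F, |Y.partition i z - Y.partition i w| ^ p
      ≤ (F.card : ℝ) ^ (1 - p) * (∑ i ∈ F, |Y.partition i z - Y.partition i w|) ^ p :=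
        F.sum_rpow_le_card_rpow_mul_rpow_sum (fun i _ => abs_nonneg _) hp₀.le hp₁
    _ ≤ (4 * D ^ 4) ^ (1 - p) * (4 * D ^ 4 * (80 / 7 * (dist z w / infDist z N))) ^ p := by
        gcongr
        exact (sum_abs_partition_sub_partition_le hN hne hw hzw hd hF).trans_eq (by ring)
    _ = 4 * D ^ 4 * ((10 / 7) ^ p * 8 ^ p * (dist z w ^ p / infDist z N ^ p)) := by
        rw [Real.mul_rpow hX (by positivity), ← mul_assoc, ← Real.rpow_add' hX (by norm_num),
          sub_add_cancel, Real.rpow_one, hpow]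
    _ ≤ 4 * D ^ 4 * (10 / 7 * 8 ^ p * (dist z w ^ p / infDist z N ^ p)) := by
        gcongr
        simpa using Real.rpow_le_rpow_of_exponent_le (by norm_num : (1 : ℝ) ≤ 10 / 7) hp₁
    _ ≤ 6 * 8 ^ p * D ^ 4 * dist z w ^ p / infDist z N ^ p := by
        rw [mul_div_assoc _ (dist z w ^ p)]
        linarith

lemma finsum_abs_partition_sub_rpow_le (hN : SubsetDoublingConstant N D) (hne : N.Nonempty)
    (hw : 0 < infDist w N) (hzw : infDist w N ≤ infDist z N) {p : ℝ} (hp₀ : 0 < p)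
    (hp₁ : p ≤ 1) :
    ∑ᶠ i, |Y.partition i z - Y.partition i w| ^ p ≤
      6 * 8 ^ p * D ^ 4 * dist z w ^ p / infDist z N ^ p := by
  obtain ⟨F, hF, hcard⟩ := Y.exists_finset_active hN hne z w
  have hsupp : (Function.support fun i => |Y.partition i z - Y.partition i w| ^ p) ⊆ F := by
    intro i hi
    by_contra hiF
    have h₀ : Y.bump i z = 0 ∧ Y.bump i w = 0 := by simpa [hF] using hiF
    simp [partition, h₀.1, h₀.2, Real.zero_rpow hp₀.ne'] at hi
  rw [finsum_eq_sum_of_support_subset _ hsupp]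
  rcases le_or_gt (infDist z N) (8 * dist z w) with hd | hd
  · exact sum_abs_partition_sub_rpow_le_of_le hN hne hw hzw hd hcard hp₀
  · exact sum_abs_partition_sub_rpow_le_of_lt hN hne hw hzw hd hF hcard hp₀ hp₁

end Active

end DyadicNets

end

theorem stmt5_general (M : Type) [MetricSpace M] (N : Set M) (hne : N.Nonempty)
    (hcl : IsClosed N) (D : ℕ) (hdoub : SubsetDoublingConstant N D) :
    ∃ (I : Type) (_ : Countable I) (ψ : I → M → ℝ) (x : I → M),
      (∀ i, x i ∈ N) ∧
      (∀ i, ∀ z : M, z ∉ N → ψ i z ∈ Set.Icc (0 : ℝ) 1) ∧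
      (∀ z : M, z ∉ N → ∑ᶠ i : I, ψ i z = 1) ∧
      (∀ z : M, z ∉ N → {i : I | 0 < ψ i z}.encard ≤ ((3 * D ^ 4 : ℕ) : ℕ∞)) ∧
      (∀ i, ∀ z : M, z ∉ N → 0 < ψ i z → dist (x i) z ≤ 7 * Metric.infDist z N) ∧
      (∀ p : ℝ, 0 < p → p ≤ 1 → ∀ z w : M, z ∉ N → w ∉ N →
        ∑ᶠ i : I, |ψ i z - ψ i w| ^ p ≤
          6 * 8 ^ p * (D : ℝ) ^ 4 * dist z w ^ p /
            max (Metric.infDist z N) (Metric.infDist w N) ^ p) := by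
  obtain ⟨Y⟩ := DyadicNets.nonempty N
  have hpos : ∀ z, z ∉ N → 0 < infDist z N := fun z => (hcl.notMem_iff_infDist_pos hne).1
  refine ⟨Y.Index, Y.countable_index hdoub, Y.partition, fun i => i.2,
    fun i => Y.net_subset i.1 i.2.2,
    fun i z hz => ⟨Y.partition_nonneg i z, Y.partition_le_one hdoub hne i (hpos z hz)⟩,
    fun z hz => Y.finsum_partition hdoub hne (hpos z hz),
    fun z hz => (Y.encard_setOf_partition_pos_le hdoub hne (hpos z hz)).trans ?_,
    fun i z hz => Y.dist_le_of_partition_pos hdoub hne (hpos z hz),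
    fun p hp₀ hp₁ z w hz hw => ?_⟩
  · push_cast; gcongr; norm_num
  rcases le_total (infDist w N) (infDist z N) with h | h
  · rw [max_eq_left h]
    exact Y.finsum_abs_partition_sub_rpow_le hdoub hne (hpos w hw) h hp₀ hp₁
  · rw [max_eq_right h, dist_comm]
    simp_rw [abs_sub_comm (Y.partition _ z)]
    exact Y.finsum_abs_partition_sub_rpow_le hdoub hne (hpos z hz) h hp₀ hp₁

/-- **Random-projection-type partition of unity on the complement of a doubling subset.**
Let `(M, d)` be a metric space and `N ⊆ M` a nonempty closed subset with doubling constant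
`D ≥ 2` in the induced metric.  Then there are a countable index set `I`, functions
`ψ_i : M∖N → [0,1]` and points `x_i ∈ N` such that:
(1) `∑ᵢ ψ_i(x) = 1` for every `x ∈ M∖N`;
(2) for every `x ∈ M∖N` at most `3D⁴` of the values `ψ_i(x)` are positive;
(3) `ψ_i(x) > 0` implies `d(x_i, x) ≤ 7·d(x, N)`;
(4) for every `p ∈ (0,1]` and `x, y ∈ M∖N`,
    `∑ᵢ |ψ_i(x) − ψ_i(y)|^p ≤ 6·8^p·D⁴·d(x,y)^p / max(d(x,N), d(y,N))^p`. -/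
theorem stmt5 (M : Type) [MetricSpace M] (N : Set M) (hne : N.Nonempty)
    (hcl : IsClosed N) (D : ℕ) (hD : 2 ≤ D) (hdoub : SubsetDoublingConstant N D) :
    ∃ (I : Type) (_ : Countable I) (ψ : I → M → ℝ) (x : I → M),
      (∀ i, x i ∈ N) ∧
      (∀ i, ∀ z : M, z ∉ N → ψ i z ∈ Set.Icc (0 : ℝ) 1) ∧
      (∀ z : M, z ∉ N → ∑ᶠ i : I, ψ i z = 1) ∧
      (∀ z : M, z ∉ N → {i : I | 0 < ψ i z}.encard ≤ ((3 * D ^ 4 : ℕ) : ℕ∞)) ∧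
      (∀ i, ∀ z : M, z ∉ N → 0 < ψ i z → dist (x i) z ≤ 7 * Metric.infDist z N) ∧
      (∀ p : ℝ, 0 < p → p ≤ 1 → ∀ z w : M, z ∉ N → w ∉ N →
        ∑ᶠ i : I, |ψ i z - ψ i w| ^ p ≤
          6 * 8 ^ p * (D : ℝ) ^ 4 * dist z w ^ p /
            max (Metric.infDist z N) (Metric.infDist w N) ^ p) :=
  stmt5_general M N hne hcl D hdoub
end

section
/- Let (M, d) be a metric space and let N ⊆ M be a nonempty closed subset which, as a metric space with the induced metric, has doubling constant D ≥ 2. Then there exists an ℝ-linear map E from the vector space of all real-valued functions on N to the vector space of all real-valued functions on M such that: (1) for every g : N → ℝ, the restriction of E(g) to N equals g; and (2) for every L ≥ 0 and every L-Lipschitz function g : N → ℝ, the function E(g) : M → ℝ is (1680·D⁴·L)-Lipschitz. -/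
/-!
For each dyadic scale `2 ^ k` fix a maximal `2 ^ k`-separated net of `N`; by doubling, a ball of
radius `4 · 2 ^ k` contains at most `D ^ 4` of its points. Off `N`, `E g x` averages `g` over the
net points near `x` at the scales comparable to `infDist x N`, with weights that move at rate
`2 ^ (-k)` in `x`, glued by a partition of unity in `infDist x N`. Since only points of `N` at
distance `O(infDist x N)` from `x` are used, `E g x` is within `8 L · dist x q` of `g q` for every
`q ∈ N`, which settles the case `infDist x N ≲ dist x y`. Otherwise only four scales are
involved, and at each of them at most `D ^ 4` weights change, each by `O(dist x y / 2 ^ k)`.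
-/

open Metric Set Function

noncomputable section

namespace DoublingExtension

section Averages

variable {ι : Type*} {s : Finset ι} {a b v : ι → ℝ} {c B : ℝ}

lemma abs_centerMass_sub_le (ha : ∀ i ∈ s, 0 ≤ a i) (hpos : 0 < ∑ i ∈ s, a i)
    (hv : ∀ i ∈ s, a i ≠ 0 → |v i - c| ≤ B) : |s.centerMass a v - c| ≤ B := by
  classical
  rw [← s.centerMass_filter_ne_zero, ← Real.dist_eq, ← mem_closedBall]
  refine (convex_closedBall c B).centerMass_mem (fun i hi => ha i (Finset.mem_filter.1 hi).1)
    (by rwa [Finset.sum_filter_ne_zero]) fun i hi => ?_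
  obtain ⟨hi, hne⟩ := Finset.mem_filter.1 hi
  exact hv i hi hne

lemma abs_sum_mul_sub_le (ha : ∀ i ∈ s, 0 ≤ a i) (hsum : ∑ i ∈ s, a i = 1)
    (hv : ∀ i ∈ s, a i ≠ 0 → |v i - c| ≤ B) : |∑ i ∈ s, a i * v i - c| ≤ B := by
  simpa [s.centerMass_eq_of_sum_1 v hsum] using
    abs_centerMass_sub_le ha (hsum ▸ one_pos) hv

lemma abs_centerMass_sub_centerMass_le {m δ : ℝ} (hm : 0 < m) (hb : ∀ i ∈ s, 0 ≤ b i)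
    (hma : m ≤ ∑ i ∈ s, a i) (hmb : m ≤ ∑ i ∈ s, b i)
    (hab : ∀ i ∈ s, |a i - b i| ≤ δ) (hv : ∀ i ∈ s, |v i - c| ≤ B) :
    |s.centerMass a v - s.centerMass b v| ≤ 2 * s.card * δ * B / m := by
  set A := ∑ i ∈ s, a i
  set A' := ∑ i ∈ s, b i
  have hA : 0 < A := hm.trans_le hma
  have hA' : 0 < A' := hm.trans_le hmb
  obtain ⟨j, hj⟩ : s.Nonempty := Finset.nonempty_of_sum_ne_zero hA.ne'
  have hB : 0 ≤ B := (abs_nonneg _).trans (hv j hj)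
  have hδ : 0 ≤ δ := (abs_nonneg _).trans (hab j hj)
  have hdiff : |∑ i ∈ s, (a i - b i) * (v i - c)| ≤ s.card * (δ * B) := by
    refine (Finset.abs_sum_le_sum_abs _ _).trans ((Finset.sum_le_card_nsmul _ _ _ ?_).trans_eq
      (nsmul_eq_mul _ _))
    intro i hi
    rw [abs_mul]
    exact mul_le_mul (hab i hi) (hv i hi) (abs_nonneg _) hδ
  have hsum : |A' - A| ≤ s.card * δ := by
    rw [← Finset.sum_sub_distrib, ← nsmul_eq_mul]
    refine (Finset.abs_sum_le_sum_abs _ _).trans (Finset.sum_le_card_nsmul _ _ _ fun i hi => ?_)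
    rw [abs_sub_comm]
    exact hab i hi
  have hcb : |s.centerMass b v - c| ≤ B := abs_centerMass_sub_le hb hA' fun i hi _ => hv i hi
  have key : s.centerMass a v - s.centerMass b v =
      (∑ i ∈ s, (a i - b i) * (v i - c)) / A + (s.centerMass b v - c) * ((A' - A) / A) := by
    have : ∑ i ∈ s, (a i - b i) * (v i - c)
        = ∑ i ∈ s, a i * v i - ∑ i ∈ s, b i * v i - c * (A - A') := by
      simp only [A, A', Finset.mul_sum, ← Finset.sum_sub_distrib]
      exact Finset.sum_congr rfl fun i _ => by ring
    have hca : s.centerMass a v = (∑ i ∈ s, a i * v i) / A := by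
      simp [Finset.centerMass, div_eq_inv_mul, A]
    have hcb : s.centerMass b v = (∑ i ∈ s, b i * v i) / A' := by
      simp [Finset.centerMass, div_eq_inv_mul, A']
    rw [hca, hcb, this]
    field_simp
    ring
  calc |s.centerMass a v - s.centerMass b v|
      ≤ |∑ i ∈ s, (a i - b i) * (v i - c)| / A + B * (|A' - A| / A) := by
        rw [key]
        refine (abs_add_le _ _).trans ?_
        rw [abs_div, abs_of_pos hA, abs_mul, abs_div, abs_of_pos hA]
        gcongr
    _ ≤ s.card * (δ * B) / m + B * (s.card * δ / m) := by
        gcongr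
    _ = 2 * s.card * δ * B / m := by ring

lemma sum_mul_sub_sum_mul_eq {u : ι → ℝ} (ha : ∑ i ∈ s, a i = 1)
    (hb : ∑ i ∈ s, b i = 1) (c : ℝ) : ∑ i ∈ s, a i * u i - ∑ i ∈ s, b i * v i =
      ∑ i ∈ s, (a i - b i) * (u i - c) + ∑ i ∈ s, b i * (u i - v i) := by
  have : ∑ i ∈ s, (a i - b i) * c = 0 := by
    rw [← Finset.sum_mul, Finset.sum_sub_distrib, ha, hb, sub_self, zero_mul]
  rw [← add_zero (∑ i ∈ s, (a i - b i) * (u i - c)), ← this, ← Finset.sum_add_distrib,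
    ← Finset.sum_add_distrib, ← Finset.sum_sub_distrib]
  exact Finset.sum_congr rfl fun i _ => by ring

end Averages

def clamp (t : ℝ) : ℝ := projIcc 0 1 zero_le_one t

lemma clamp_nonneg (t : ℝ) : 0 ≤ clamp t := (projIcc 0 1 zero_le_one t).2.1

lemma clamp_of_nonpos {t : ℝ} (ht : t ≤ 0) : clamp t = 0 := by
  simp [clamp, projIcc_of_le_left _ ht]

lemma clamp_of_one_le {t : ℝ} (ht : 1 ≤ t) : clamp t = 1 := by
  simp [clamp, projIcc_of_right_le _ ht]

lemma clamp_mono : Monotone clamp := fun _ _ h => monotone_projIcc zero_le_one h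

lemma clamp_of_mem {t : ℝ} (ht : t ∈ Icc 0 1) : clamp t = t := by
  simp [clamp, projIcc_of_mem _ ht]

lemma abs_clamp_sub_clamp_le (s t : ℝ) : |clamp s - clamp t| ≤ |s - t| := by
  unfold clamp
  simpa [Subtype.dist_eq, Real.dist_eq] using (LipschitzWith.projIcc zero_le_one).dist_le_mul s t

def ramp (k : ℤ) (t : ℝ) : ℝ := clamp (t / 2 ^ k - 1)

lemma ramp_of_le {k : ℤ} {t : ℝ} (ht : t ≤ 2 ^ k) : ramp k t = 0 :=
  clamp_of_nonpos <| by rw [sub_nonpos, div_le_one (by positivity)]; exact ht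

lemma ramp_of_two_mul_le {k : ℤ} {t : ℝ} (ht : 2 * 2 ^ k ≤ t) : ramp k t = 1 :=
  clamp_of_one_le <| by rw [le_sub_iff_add_le, le_div_iff₀ (by positivity)]; linarith

lemma ramp_antitone {k l : ℤ} (hkl : k ≤ l) {t : ℝ} (ht : 0 ≤ t) : ramp l t ≤ ramp k t :=
  clamp_mono <| by
    gcongr
    exact one_le_two

lemma abs_ramp_sub_ramp_le (k : ℤ) (t s : ℝ) : |ramp k t - ramp k s| ≤ |t - s| / 2 ^ k := by
  refine (abs_clamp_sub_clamp_le _ _).trans_eq ?_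
  rw [show t / 2 ^ k - 1 - (s / 2 ^ k - 1) = (t - s) / 2 ^ k by ring, abs_div,
    abs_of_pos (zpow_pos two_pos k : (0 : ℝ) < 2 ^ k)]

def scaleWeight (k : ℤ) (t : ℝ) : ℝ := ramp (k - 1) t - ramp k t

lemma two_zpow_sub_one (k : ℤ) : (2 : ℝ) ^ (k - 1) = 2 ^ k / 2 := by
  rw [zpow_sub_one₀ two_ne_zero, div_eq_mul_inv]

lemma two_zpow_log_le_and_lt {t : ℝ} (ht : 0 < t) :
    (2 : ℝ) ^ Int.log 2 t ≤ t ∧ t < 2 * 2 ^ Int.log 2 t := by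
  refine ⟨by simpa using Int.zpow_log_le_self one_lt_two ht, ?_⟩
  simpa [zpow_add_one₀, mul_comm] using Int.lt_zpow_succ_log_self (R := ℝ) one_lt_two t

lemma scaleWeight_nonneg (k : ℤ) {t : ℝ} (ht : 0 ≤ t) : 0 ≤ scaleWeight k t :=
  sub_nonneg.2 (ramp_antitone (by omega) ht)

lemma scaleWeight_ne_zero {k : ℤ} {t : ℝ} (h : scaleWeight k t ≠ 0) :
    2 ^ k < 2 * t ∧ t < 2 * 2 ^ k := by
  have h2 := two_zpow_sub_one k
  have hk : (0 : ℝ) < 2 ^ k := by positivity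
  constructor
  · by_contra! ht
    refine h ?_
    rw [scaleWeight, ramp_of_le (by linarith), ramp_of_le (by linarith), sub_self]
  · by_contra! ht
    refine h ?_
    rw [scaleWeight, ramp_of_two_mul_le (by linarith), ramp_of_two_mul_le ht, sub_self]

lemma abs_scaleWeight_sub_le (k : ℤ) (t s : ℝ) :
    |scaleWeight k t - scaleWeight k s| ≤ 3 * |t - s| / 2 ^ k := by
  have h1 := abs_ramp_sub_ramp_le (k - 1) t s
  have h2 := abs_ramp_sub_ramp_le k t s
  rw [two_zpow_sub_one] at h1
  calc |scaleWeight k t - scaleWeight k s|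
      ≤ |ramp (k - 1) t - ramp (k - 1) s| + |ramp k t - ramp k s| := by
        rw [scaleWeight, scaleWeight, show ∀ a b c d : ℝ, a - b - (c - d) = (a - c) - (b - d) by
          intros; ring]
        exact abs_sub _ _
    _ ≤ |t - s| / (2 ^ k / 2) + |t - s| / 2 ^ k := add_le_add h1 h2
    _ = 3 * |t - s| / 2 ^ k := by field_simp; ring

lemma support_scaleWeight_subset (t : ℝ) :
    support (scaleWeight · t) ⊆ Finset.Icc (Int.log 2 t) (Int.log 2 t + 1) := by
  intro k hk
  obtain ⟨h1, h2⟩ := scaleWeight_ne_zero hk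
  have ht : 0 < t := by linarith [zpow_pos (two_pos : (0 : ℝ) < 2) k]
  have hk1 : k - 1 ≤ Int.log 2 t := (Int.zpow_le_iff_le_log one_lt_two ht).1 <| by
    push_cast; rw [two_zpow_sub_one]; linarith
  have hk2 : Int.log 2 t < k + 1 := (Int.lt_zpow_iff_log_lt one_lt_two ht).1 <| by
    push_cast; rw [zpow_add_one₀ two_ne_zero]; linarith
  rw [Finset.coe_Icc, mem_Icc]
  omega

lemma finsum_scaleWeight {t : ℝ} (ht : 0 < t) : ∑ᶠ k, scaleWeight k t = 1 := by
  set l := Int.log 2 t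
  obtain ⟨hl, hl'⟩ := two_zpow_log_le_and_lt ht
  have h1 : ramp (l - 1) t = 1 := ramp_of_two_mul_le (by rw [two_zpow_sub_one]; linarith)
  have h2 : ramp (l + 1) t = 0 := ramp_of_le (by rw [zpow_add_one₀ two_ne_zero]; linarith)
  rw [finsum_eq_sum_of_support_subset _ (support_scaleWeight_subset t),
    show Finset.Icc l (l + 1) = {l, l + 1} by ext; simp; omega, Finset.sum_pair (by omega)]
  simp only [scaleWeight, add_sub_cancel_right, h1, h2]
  ring

lemma finite_support_scaleWeight (t : ℝ) : (support (scaleWeight · t)).Finite :=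
  (Finset.finite_toSet _).subset (support_scaleWeight_subset t)

lemma sum_scaleWeight_eq_one {t : ℝ} (ht : 0 < t) {K : Finset ℤ}
    (hK : support (scaleWeight · t) ⊆ K) : ∑ k ∈ K, scaleWeight k t = 1 := by
  rw [← finsum_eq_sum_of_support_subset _ hK, finsum_scaleWeight ht]

lemma scale_bounds_of_scaleWeight_ne_zero {k : ℤ} {s t d : ℝ} (h : scaleWeight k s ≠ 0)
    (hts : |t - s| ≤ d) (hd : 16 * d < t) : 2 ^ k ≤ 17 / 8 * t ∧ t ≤ 32 / 15 * 2 ^ k := by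
  obtain ⟨h1, h2⟩ := scaleWeight_ne_zero h
  obtain ⟨h3, h4⟩ := abs_sub_le_iff.1 hts
  constructor <;> linarith

lemma mem_Icc_log_of_scale_bounds {k : ℤ} {t : ℝ} (ht : 0 < t)
    (h : 2 ^ k ≤ 17 / 8 * t ∧ t ≤ 32 / 15 * 2 ^ k) :
    k ∈ Finset.Icc (Int.log 2 t - 1) (Int.log 2 t + 2) := by
  obtain ⟨hl, hl'⟩ := two_zpow_log_le_and_lt ht
  have h1 : k < Int.log 2 t + 3 := (zpow_lt_zpow_iff_right₀ (one_lt_two (α := ℝ))).1 <| by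
    rw [zpow_add₀ two_ne_zero]; norm_num; linarith
  have h2 : Int.log 2 t < k + 2 := (zpow_lt_zpow_iff_right₀ (one_lt_two (α := ℝ))).1 <| by
    rw [zpow_add₀ two_ne_zero]; norm_num; linarith [zpow_pos (two_pos : (0 : ℝ) < 2) k]
  rw [Finset.mem_Icc]
  omega

/-- Still at least `1/10` at distance `69/20 · 2 ^ k`: from a point within `12/5 · 2 ^ k` of `N`,
some net point of scale `k` lies that close. -/
def bump (k : ℤ) (r : ℝ) : ℝ := clamp (7 - 2 * r / 2 ^ k)

lemma bump_ne_zero {k : ℤ} {r : ℝ} (h : bump k r ≠ 0) : 2 * r < 7 * 2 ^ k := by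
  by_contra! hr
  refine h (clamp_of_nonpos ?_)
  rw [sub_nonpos, le_div_iff₀ (by positivity)]
  linarith

lemma one_tenth_le_bump {k : ℤ} {r : ℝ} (hr : 2 * r ≤ 69 / 10 * 2 ^ k) :
    1 / 10 ≤ bump k r := by
  rw [← clamp_of_mem (by norm_num : (1 / 10 : ℝ) ∈ Icc 0 1)]
  refine clamp_mono ?_
  have : 2 * r / 2 ^ k ≤ 69 / 10 := by rwa [div_le_iff₀ (by positivity)]
  linarith

lemma abs_bump_sub_bump_le (k : ℤ) (r s : ℝ) :
    |bump k r - bump k s| ≤ 2 * |r - s| / 2 ^ k := by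
  refine (abs_clamp_sub_clamp_le _ _).trans_eq ?_
  rw [show 7 - 2 * r / 2 ^ k - (7 - 2 * s / 2 ^ k) = -(2 * (r - s) / 2 ^ k) by ring, abs_neg,
    abs_div, abs_mul, abs_two, abs_of_pos (zpow_pos two_pos k : (0 : ℝ) < 2 ^ k)]

def HasDoublingConstant (X : Type*) [MetricSpace X] (D : ℕ) : Prop :=
  ∀ (y : X) (ρ : ℝ), 0 < ρ →
    ∃ T : Finset X, T.card ≤ D ∧ closedBall y ρ ⊆ ⋃ c ∈ T, closedBall c (ρ / 2)

section Doubling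

variable {X : Type*} [MetricSpace X] {D : ℕ}

lemma _root_.SubsetDoublingConstant.hasDoublingConstant {M : Type*} [MetricSpace M] {N : Set M}
    (h : SubsetDoublingConstant N D) : HasDoublingConstant N D := by
  classical
  intro y ρ hρ
  obtain ⟨T, hTN, hTD, hcov⟩ := h y y.2 ρ hρ
  refine ⟨T.subtype (· ∈ N),
    (Finset.card_subtype _ _).trans_le ((Finset.card_filter_le _ _).trans hTD), fun p hp => ?_⟩
  obtain ⟨c, hc, hpc⟩ := mem_iUnion₂.1 (hcov ⟨p.2, hp⟩)
  exact mem_iUnion₂.2 ⟨⟨c, hTN hc⟩, Finset.mem_subtype.2 hc, hpc⟩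

lemma _root_.SubsetDoublingConstant.one_le {M : Type*} [MetricSpace M] {N : Set M}
    (h : SubsetDoublingConstant N D) (hne : N.Nonempty) : 1 ≤ D := by
  obtain ⟨y, hy⟩ := hne
  obtain ⟨T, -, hTD, hcov⟩ := h y hy 1 one_pos
  obtain ⟨c, hc, -⟩ := mem_iUnion₂.1 (hcov ⟨hy, mem_closedBall_self zero_le_one⟩)
  exact (Finset.card_pos.2 ⟨c, hc⟩).trans_le hTD

lemma HasDoublingConstant.exists_cover_pow (h : HasDoublingConstant X D) (n : ℕ) (y : X)
    {ρ : ℝ} (hρ : 0 < ρ) :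
    ∃ T : Finset X, T.card ≤ D ^ n ∧
      closedBall y ρ ⊆ ⋃ c ∈ T, closedBall c (ρ / 2 ^ n) := by
  classical
  induction n with
  | zero => exact ⟨{y}, by simp, by simp⟩
  | succ n ih =>
    obtain ⟨T, hTD, hcov⟩ := ih
    choose f hfD hf using fun c : X => h c (ρ / 2 ^ n) (by positivity)
    refine ⟨T.biUnion f, ?_, fun p hp => ?_⟩
    · calc (T.biUnion f).card ≤ ∑ c ∈ T, (f c).card := Finset.card_biUnion_le
        _ ≤ T.card * D := by simpa using Finset.sum_le_card_nsmul T _ D fun c _ => hfD c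
        _ ≤ D ^ (n + 1) := by rw [pow_succ]; exact Nat.mul_le_mul_right D hTD
    · obtain ⟨c, hc, hpc⟩ := mem_iUnion₂.1 (hcov hp)
      obtain ⟨c', hc', hpc'⟩ := mem_iUnion₂.1 (hf c hpc)
      rw [pow_succ, ← div_div]
      exact mem_iUnion₂.2 ⟨c', Finset.mem_biUnion.2 ⟨c, hc, hc'⟩, hpc'⟩

lemma HasDoublingConstant.encard_le_pow (h : HasDoublingConstant X D) {S : Set X} {s : ℝ}
    (hs : 0 < s) (hS : S.Pairwise (s < dist · ·)) {y : X} {n : ℕ}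
    (hSy : S ⊆ closedBall y (2 ^ n * s)) : S.encard ≤ D ^ (n + 1) := by
  obtain ⟨T, hTD, hcov⟩ := h.exists_cover_pow (n + 1) y (by positivity : 0 < 2 ^ n * s)
  rw [pow_succ, mul_div_mul_left _ _ (by positivity)] at hcov
  have : ∀ a ∈ S, ∃ c ∈ T, dist a c ≤ s / 2 := fun a ha => by simpa using hcov (hSy ha)
  choose! f hfT hf using this
  have hinj : InjOn f S := fun a ha b hb hab => by
    by_contra hne
    refine (hS ha hb hne).not_ge ?_
    calc dist a b ≤ dist a (f a) + dist b (f a) := dist_triangle_right a b (f a)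
      _ ≤ s / 2 + s / 2 := add_le_add (hf a ha) (hab ▸ hf b hb)
      _ = s := add_halves s
  calc S.encard ≤ (T : Set X).encard := encard_le_encard_of_injOn (fun a ha => hfT a ha) hinj
    _ = T.card := encard_coe_eq_coe_finsetCard T
    _ ≤ D ^ (n + 1) := by exact_mod_cast hTD

end Doubling

lemma exists_separated_dense_set (X : Type*) [MetricSpace X] {s : ℝ} (hs : 0 ≤ s) :
    ∃ Z : Set X, Z.Pairwise (s < dist · ·) ∧ ∀ p, ∃ z ∈ Z, dist p z ≤ s := by
  obtain ⟨Z, hZ⟩ := zorn_subset {Z : Set X | Z.Pairwise (s < dist · ·)} fun c hc hchain =>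
    ⟨⋃₀ c, hchain.pairwise_sUnion.2 hc, fun _ => subset_sUnion_of_mem⟩
  refine ⟨Z, hZ.prop, fun p => ?_⟩
  by_contra! hp
  have hpZ : p ∈ Z := hZ.2 (hZ.prop.insert fun z hz _ => ⟨hp z hz, dist_comm p z ▸ hp z hz⟩)
    (subset_insert p Z) (mem_insert p Z)
  linarith [hp p hpZ, dist_self p]

section Extension

variable {M : Type*} [MetricSpace M] {N : Set M}

/-- The net points of scale `k` that can carry weight at `x` (or at any point within `2^(k-1)`
of `x`). -/
def localNet (Z : ℤ → Set N) (k : ℤ) (x : M) : Set N := {z ∈ Z k | dist x z ≤ 4 * 2 ^ k}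

structure IsDyadicNetFamily (Z : ℤ → Set N) (A : ℕ) : Prop where
  dense : ∀ k (p : N), ∃ z ∈ Z k, dist p z ≤ 2 ^ k
  encard_localNet_le : ∀ k x, (localNet Z k x).encard ≤ A

lemma _root_.SubsetDoublingConstant.exists_isDyadicNetFamily {D : ℕ}
    (h : SubsetDoublingConstant N D) : ∃ Z : ℤ → Set N, IsDyadicNetFamily Z (D ^ 4) := by
  choose Z hsep hdense using fun k : ℤ => exists_separated_dense_set N (zpow_pos two_pos k).le
  refine ⟨Z, hdense, fun k x => ?_⟩
  rcases (localNet Z k x).eq_empty_or_nonempty with he | ⟨z₀, -, hz₀⟩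
  · simp [he]
  refine h.hasDoublingConstant.encard_le_pow (zpow_pos two_pos k) ((hsep k).mono fun z hz => hz.1)
    (y := z₀) (n := 3) fun z ⟨_, hz⟩ => ?_
  rw [mem_closedBall, Subtype.dist_eq]
  linarith [dist_triangle_left (z : M) z₀ x]

def netWeight (Z : ℤ → Set N) (k : ℤ) (x : M) : N → ℝ :=
  (Z k).indicator fun z => bump k (dist x z)

def netAverage (Z : ℤ → Set N) (k : ℤ) (g : N → ℝ) (x : M) : ℝ :=
  (∑ᶠ z, netWeight Z k x z * g z) / ∑ᶠ z, netWeight Z k x z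

open scoped Classical in
def extension (Z : ℤ → Set N) (g : N → ℝ) (x : M) : ℝ :=
  if hx : x ∈ N then g ⟨x, hx⟩ else ∑ᶠ k, scaleWeight k (infDist x N) * netAverage Z k g x

variable {Z : ℤ → Set N} {A : ℕ} {k : ℤ} {x y : M} {z : N} {g : N → ℝ} {L : ℝ}

lemma netWeight_nonneg : 0 ≤ netWeight Z k x z :=
  indicator_nonneg (fun _ _ => clamp_nonneg _) z

lemma netWeight_ne_zero (h : netWeight Z k x z ≠ 0) : z ∈ Z k ∧ 2 * dist x z < 7 * 2 ^ k := by
  have hz := mem_of_indicator_ne_zero h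
  exact ⟨hz, bump_ne_zero (by rwa [netWeight, indicator_of_mem hz] at h)⟩

lemma abs_netWeight_sub_netWeight_le :
    |netWeight Z k x z - netWeight Z k y z| ≤ 2 * dist x y / 2 ^ k := by
  by_cases hz : z ∈ Z k
  · simp only [netWeight, indicator_of_mem hz]
    refine (abs_bump_sub_bump_le k _ _).trans ?_
    gcongr
    exact abs_dist_sub_le _ _ _
  · simp only [netWeight, indicator_of_notMem hz, sub_self, abs_zero]
    positivity

lemma support_netWeight_subset_localNet : support (netWeight Z k x) ⊆ localNet Z k x := by
  intro z hz
  obtain ⟨hzZ, hxz⟩ := netWeight_ne_zero hz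
  exact ⟨hzZ, by linarith [zpow_pos (two_pos : (0 : ℝ) < 2) k]⟩

lemma netAverage_eq_centerMass {T : Finset N} (hT : support (netWeight Z k x) ⊆ T) :
    netAverage Z k g x = T.centerMass (netWeight Z k x) g := by
  rw [netAverage, finsum_eq_sum_of_support_subset _ hT,
    finsum_eq_sum_of_support_subset _ ((support_mul_subset_left _ _).trans hT),
    Finset.centerMass, smul_eq_mul, div_eq_inv_mul]
  simp only [smul_eq_mul]

lemma IsDyadicNetFamily.finite_localNet (hZ : IsDyadicNetFamily Z A) (k : ℤ) (x : M) :
    (localNet Z k x).Finite :=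
  finite_of_encard_le_coe (hZ.encard_localNet_le k x)

lemma netAverage_add (hZ : IsDyadicNetFamily Z A) (g h : N → ℝ) :
    netAverage Z k (g + h) x = netAverage Z k g x + netAverage Z k h x := by
  have hfin := (hZ.finite_localNet k x).subset support_netWeight_subset_localNet
  rw [netAverage, netAverage, netAverage, ← add_div]
  simp only [Pi.add_apply, mul_add]
  rw [finsum_add_distrib (hfin.subset (support_mul_subset_left _ _))
    (hfin.subset (support_mul_subset_left _ _))]

lemma netAverage_smul (c : ℝ) (g : N → ℝ) :
    netAverage Z k (c • g) x = c * netAverage Z k g x := by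
  simp only [netAverage, Pi.smul_apply, smul_eq_mul, mul_left_comm _ c, ← mul_finsum,
    mul_div_assoc]

namespace IsDyadicNetFamily

lemma one_tenth_le_sum_netWeight (hZ : IsDyadicNetFamily Z A) (hne : N.Nonempty)
    (hx : infDist x N ≤ 12 / 5 * 2 ^ k) {T : Finset N} (hT : support (netWeight Z k x) ⊆ T) :
    1 / 10 ≤ ∑ z ∈ T, netWeight Z k x z := by
  have hk : (0 : ℝ) < 2 ^ k := zpow_pos two_pos k
  obtain ⟨p, hpN, hxp⟩ := (infDist_lt_iff hne).1 (by linarith : infDist x N < 49 / 20 * 2 ^ k)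
  obtain ⟨z, hzZ, hpz⟩ := hZ.dense k ⟨p, hpN⟩
  have hxz : 2 * dist x z ≤ 69 / 10 * 2 ^ k := by
    linarith [dist_triangle x p z, Subtype.dist_eq (⟨p, hpN⟩ : N) z]
  have hw : 1 / 10 ≤ netWeight Z k x z := by
    rw [netWeight, indicator_of_mem hzZ]
    exact one_tenth_le_bump hxz
  have hzT : z ∈ T := hT (ne_of_gt (hw.trans_lt' (by norm_num)))
  exact hw.trans (Finset.single_le_sum (f := netWeight Z k x) (fun _ _ => netWeight_nonneg) hzT)

lemma abs_netAverage_sub_le (hZ : IsDyadicNetFamily Z A) (hne : N.Nonempty)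
    (hx : infDist x N ≤ 12 / 5 * 2 ^ k) {c B : ℝ}
    (hg : ∀ z ∈ Z k, 2 * dist x z < 7 * 2 ^ k → |g z - c| ≤ B) :
    |netAverage Z k g x - c| ≤ B := by
  have hT := (hZ.finite_localNet k x).coe_toFinset.symm ▸ support_netWeight_subset_localNet
  rw [netAverage_eq_centerMass hT]
  refine abs_centerMass_sub_le (fun _ _ => netWeight_nonneg)
    ((hZ.one_tenth_le_sum_netWeight hne hx hT).trans_lt' (by norm_num)) fun z _ hz => ?_
  exact hg z (netWeight_ne_zero hz).1 (netWeight_ne_zero hz).2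

/-- This is where the doubling constant enters: at most `A` net points carry weight in the two
averages. -/
lemma abs_netAverage_sub_netAverage_le (hZ : IsDyadicNetFamily Z A) (hne : N.Nonempty)
    (hL : 0 ≤ L) (hg : ∀ z w : N, |g z - g w| ≤ L * dist z w)
    (hxy : 2 * dist x y ≤ 2 ^ k) (hx : infDist x N ≤ 12 / 5 * 2 ^ k)
    (hy : infDist y N ≤ 12 / 5 * 2 ^ k) :
    |netAverage Z k g x - netAverage Z k g y| ≤ 260 * A * L * dist x y := by
  have hk : (0 : ℝ) < 2 ^ k := zpow_pos two_pos k
  set T := (hZ.finite_localNet k x).toFinset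
  have hTx : support (netWeight Z k x) ⊆ T := by
    rw [Finite.coe_toFinset]; exact support_netWeight_subset_localNet
  have hTy : support (netWeight Z k y) ⊆ T := by
    intro z hz
    obtain ⟨hzZ, hyz⟩ := netWeight_ne_zero hz
    rw [Finite.coe_toFinset]
    exact ⟨hzZ, by linarith [dist_triangle x y z]⟩
  have hTA : (T.card : ℝ) ≤ A := by
    have := hZ.encard_localNet_le k x
    rw [(hZ.finite_localNet k x).encard_eq_coe_toFinset_card] at this
    exact_mod_cast this
  obtain ⟨p, hpN, hxp⟩ := (infDist_lt_iff hne).1 (by linarith : infDist x N < 49 / 20 * 2 ^ k)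
  have hgp : ∀ z ∈ T, |g z - g ⟨p, hpN⟩| ≤ L * (129 / 20 * 2 ^ k) := by
    intro z hz
    rw [Finite.mem_toFinset] at hz
    refine (hg z _).trans (mul_le_mul_of_nonneg_left ?_ hL)
    rw [Subtype.dist_eq]
    linarith [hz.2, dist_triangle_left (z : M) p x]
  rw [netAverage_eq_centerMass hTx, netAverage_eq_centerMass hTy]
  refine (abs_centerMass_sub_centerMass_le (by norm_num : (0 : ℝ) < 1 / 10)
    (fun _ _ => netWeight_nonneg) (hZ.one_tenth_le_sum_netWeight hne hx hTx)
    (hZ.one_tenth_le_sum_netWeight hne hy hTy) (fun _ _ => abs_netWeight_sub_netWeight_le)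
    hgp).trans ?_
  calc 2 * T.card * (2 * dist x y / 2 ^ k) * (L * (129 / 20 * 2 ^ k)) / (1 / 10)
      = 258 * T.card * L * dist x y := by field_simp; ring
    _ ≤ 260 * A * L * dist x y := by gcongr; linarith

end IsDyadicNetFamily

@[simp]
lemma extension_of_mem (g : N → ℝ) (z : N) : extension Z g z = g z := by
  simp [extension]

lemma extension_eq_sum (hx : x ∉ N) {K : Finset ℤ}
    (hK : support (scaleWeight · (infDist x N)) ⊆ K) :
    extension Z g x = ∑ k ∈ K, scaleWeight k (infDist x N) * netAverage Z k g x := by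
  rw [extension, dif_neg hx,
    finsum_eq_sum_of_support_subset _ ((support_mul_subset_left _ _).trans hK)]

lemma extension_add (hZ : IsDyadicNetFamily Z A) (g h : N → ℝ) :
    extension Z (g + h) = extension Z g + extension Z h := by
  funext x
  by_cases hx : x ∈ N
  · simp [extension, hx]
  · have hfin := finite_support_scaleWeight (infDist x N)
    simp only [extension, dif_neg hx, Pi.add_apply, netAverage_add hZ, mul_add]
    exact finsum_add_distrib (hfin.subset (support_mul_subset_left _ _))
      (hfin.subset (support_mul_subset_left _ _))

lemma extension_smul (c : ℝ) (g : N → ℝ) : extension Z (c • g) = c • extension Z g := by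
  funext x
  by_cases hx : x ∈ N
  · simp [extension, hx]
  · simp only [extension, dif_neg hx, netAverage_smul, Pi.smul_apply, smul_eq_mul, mul_finsum,
      mul_left_comm c]

def extensionLinearMap (hZ : IsDyadicNetFamily Z A) : (N → ℝ) →ₗ[ℝ] (M → ℝ) where
  toFun := extension Z
  map_add' := extension_add hZ
  map_smul' := extension_smul

namespace IsDyadicNetFamily

lemma abs_extension_sub_le (hZ : IsDyadicNetFamily Z A) (hne : N.Nonempty) (hcl : IsClosed N)
    (hL : 0 ≤ L) (hg : ∀ z w : N, |g z - g w| ≤ L * dist z w) (x : M) (q : N) :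
    |extension Z g x - g q| ≤ 8 * L * dist x q := by
  have hxq : 0 ≤ L * dist x q := mul_nonneg hL dist_nonneg
  by_cases hx : x ∈ N
  · rw [show x = ((⟨x, hx⟩ : N) : M) from rfl, extension_of_mem]
    exact (hg _ q).trans (by rw [Subtype.dist_eq]; linarith)
  set t := infDist x N
  have ht : 0 < t := (hcl.notMem_iff_infDist_pos hne).1 hx
  have htq : t ≤ dist x q := infDist_le_dist_of_mem q.2
  have hK := (finite_support_scaleWeight t).coe_toFinset.ge
  rw [extension_eq_sum hx hK]
  refine abs_sum_mul_sub_le (fun k _ => scaleWeight_nonneg k ht.le) (sum_scaleWeight_eq_one ht hK)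
    fun k _ hk => ?_
  obtain ⟨h1, h2⟩ := scaleWeight_ne_zero hk
  refine hZ.abs_netAverage_sub_le hne (by linarith) fun z _ hz => (hg z q).trans ?_
  rw [Subtype.dist_eq]
  have : L * dist (z : M) q ≤ L * (7 / 2 * 2 ^ k + dist x q) :=
    mul_le_mul_of_nonneg_left (by linarith [dist_triangle_left (z : M) q x]) hL
  nlinarith

lemma abs_extension_sub_extension_le_of_infDist_le (hZ : IsDyadicNetFamily Z A)
    (hne : N.Nonempty) (hcl : IsClosed N) (hL : 0 ≤ L)
    (hg : ∀ z w : N, |g z - g w| ≤ L * dist z w)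
    (h : infDist x N ≤ 16 * dist x y) :
    |extension Z g x - extension Z g y| ≤ 280 * L * dist x y := by
  rcases eq_or_ne x y with rfl | hxy
  · simp
  obtain ⟨p, hpN, hxp⟩ := (infDist_lt_iff hne).1 (h.trans_lt (by linarith [dist_pos.2 hxy] :
    16 * dist x y < 17 * dist x y))
  have hx := hZ.abs_extension_sub_le hne hcl hL hg x ⟨p, hpN⟩
  have hy := hZ.abs_extension_sub_le hne hcl hL hg y ⟨p, hpN⟩
  have hyp : L * dist y p ≤ L * (18 * dist x y) :=
    mul_le_mul_of_nonneg_left (by linarith [dist_triangle_left y p x]) hL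
  have hxp' : L * dist x p ≤ L * (17 * dist x y) := mul_le_mul_of_nonneg_left hxp.le hL
  calc |extension Z g x - extension Z g y|
      ≤ |extension Z g x - g ⟨p, hpN⟩| + |extension Z g y - g ⟨p, hpN⟩| := by
        rw [abs_sub_comm (extension Z g y)]; exact abs_sub_le _ _ _
    _ ≤ 280 * L * dist x y := by linarith

/-- Both extensions are sums over the same four scales. In their difference, written with
`sum_mul_sub_sum_mul_eq`, the change of scale weights is paid against `g p` for a point `p ∈ N`
near `x`, and the change of averages at each scale against `abs_netAverage_sub_netAverage_le`. -/
lemma abs_extension_sub_extension_le_of_lt_infDist (hZ : IsDyadicNetFamily Z A)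
    (hne : N.Nonempty) (hcl : IsClosed N) (hL : 0 ≤ L)
    (hg : ∀ z w : N, |g z - g w| ≤ L * dist z w)
    (hx : 16 * dist x y < infDist x N) (hy : 16 * dist x y < infDist y N) :
    |extension Z g x - extension Z g y| ≤ (80 + 260 * A) * L * dist x y := by
  set d := dist x y
  set tx := infDist x N
  set ty := infDist y N
  have hd : 0 ≤ d := dist_nonneg
  have htx : 0 < tx := by linarith
  have hty : 0 < ty := by linarith
  have hxN : x ∉ N := (hcl.notMem_iff_infDist_pos hne).2 htx
  have hyN : y ∉ N := (hcl.notMem_iff_infDist_pos hne).2 hty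
  have htxy : |tx - ty| ≤ d := by
    simpa [Real.dist_eq] using (lipschitz_infDist_pt N).dist_le_mul x y
  have hscale : ∀ k, (scaleWeight k tx ≠ 0 ∨ scaleWeight k ty ≠ 0) →
      2 ^ k ≤ 17 / 8 * tx ∧ tx ≤ 32 / 15 * 2 ^ k := by
    rintro k (h | h)
    · exact scale_bounds_of_scaleWeight_ne_zero h (by simpa using hd) hx
    · exact scale_bounds_of_scaleWeight_ne_zero h htxy hx
  set K := Finset.Icc (Int.log 2 tx - 1) (Int.log 2 tx + 2)
  have hKx : support (scaleWeight · tx) ⊆ K := fun k hk =>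
    mem_Icc_log_of_scale_bounds htx (hscale k (Or.inl hk))
  have hKy : support (scaleWeight · ty) ⊆ K := fun k hk =>
    mem_Icc_log_of_scale_bounds htx (hscale k (Or.inr hk))
  have hK4 : K.card = 4 := by simp only [K, Int.card_Icc]; omega
  obtain ⟨p, hpN, hxp⟩ := (infDist_lt_iff hne).1 (by linarith : tx < 17 / 16 * tx)
  rw [extension_eq_sum hxN hKx, extension_eq_sum hyN hKy,
    sum_mul_sub_sum_mul_eq (sum_scaleWeight_eq_one htx hKx) (sum_scaleWeight_eq_one hty hKy)
      (g ⟨p, hpN⟩)]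
  have hfirst : ∀ k ∈ K, |(scaleWeight k tx - scaleWeight k ty) *
      (netAverage Z k g x - g ⟨p, hpN⟩)| ≤ 20 * L * d := by
    intro k _
    by_cases h0 : scaleWeight k tx = 0 ∧ scaleWeight k ty = 0
    · rw [h0.1, h0.2, sub_self, zero_mul, abs_zero]
      positivity
    obtain ⟨hk1, hk2⟩ := hscale k (not_and_or.1 h0)
    have hk : (0 : ℝ) < 2 ^ k := zpow_pos two_pos k
    have hF : |netAverage Z k g x - g ⟨p, hpN⟩| ≤ L * (173 / 30 * 2 ^ k) :=
      hZ.abs_netAverage_sub_le hne (by linarith) fun z _ hz =>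
        (hg z _).trans <| mul_le_mul_of_nonneg_left (by
          rw [Subtype.dist_eq]; linarith [dist_triangle_left (z : M) p x]) hL
    calc _ = |scaleWeight k tx - scaleWeight k ty| * |netAverage Z k g x - g ⟨p, hpN⟩| :=
          abs_mul _ _
      _ ≤ 3 * d / 2 ^ k * (L * (173 / 30 * 2 ^ k)) :=
          mul_le_mul ((abs_scaleWeight_sub_le k tx ty).trans (by gcongr)) hF (abs_nonneg _)
            (by positivity)
      _ = 173 / 10 * (L * d) := by field_simp; ring
      _ ≤ 20 * L * d := by nlinarith [mul_nonneg hL hd]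
  have hsecond : |∑ k ∈ K, scaleWeight k ty * (netAverage Z k g x - netAverage Z k g y)|
      ≤ 260 * A * L * d := by
    simpa using abs_sum_mul_sub_le (c := 0) (fun k _ => scaleWeight_nonneg k hty.le)
      (sum_scaleWeight_eq_one hty hKy) fun k _ hk => by
        obtain ⟨h1, h2⟩ := scaleWeight_ne_zero hk
        obtain ⟨hk1, hk2⟩ := hscale k (Or.inr hk)
        rw [sub_zero]
        exact hZ.abs_netAverage_sub_netAverage_le hne hL hg (by linarith) (by linarith)
          (by linarith)
  calc _ ≤ |∑ k ∈ K, (scaleWeight k tx - scaleWeight k ty) *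
          (netAverage Z k g x - g ⟨p, hpN⟩)| +
        |∑ k ∈ K, scaleWeight k ty * (netAverage Z k g x - netAverage Z k g y)| :=
        abs_add_le _ _
    _ ≤ K.card • (20 * L * d) + 260 * A * L * d :=
        add_le_add ((Finset.abs_sum_le_sum_abs _ _).trans (Finset.sum_le_card_nsmul _ _ _ hfirst))
          hsecond
    _ = (80 + 260 * A) * L * d := by rw [hK4, nsmul_eq_mul]; push_cast; ring

lemma abs_extension_sub_extension_le (hZ : IsDyadicNetFamily Z A) (hne : N.Nonempty)
    (hcl : IsClosed N) (hL : 0 ≤ L) (hg : ∀ z w : N, |g z - g w| ≤ L * dist z w) (x y : M) :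
    |extension Z g x - extension Z g y| ≤ (280 + 260 * A) * L * dist x y := by
  have hLd : 0 ≤ L * dist x y := mul_nonneg hL dist_nonneg
  have hA : (0 : ℝ) ≤ A * (L * dist x y) := mul_nonneg A.cast_nonneg hLd
  by_cases hx : 16 * dist x y < infDist x N
  · by_cases hy : 16 * dist x y < infDist y N
    · refine (hZ.abs_extension_sub_extension_le_of_lt_infDist hne hcl hL hg hx hy).trans ?_
      nlinarith
    · rw [abs_sub_comm, dist_comm]
      refine (hZ.abs_extension_sub_extension_le_of_infDist_le hne hcl hL hg
        (by rw [dist_comm]; linarith)).trans ?_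
      rw [dist_comm]
      nlinarith
  · refine (hZ.abs_extension_sub_extension_le_of_infDist_le hne hcl hL hg (not_lt.1 hx)).trans ?_
    nlinarith

end IsDyadicNetFamily

end Extension

end DoublingExtension

end

open DoublingExtension in
theorem stmt6_general (M : Type) [MetricSpace M] (N : Set M) (hne : N.Nonempty)
    (hcl : IsClosed N) (D : ℕ) (hdoub : SubsetDoublingConstant N D) :
    ∃ E : (↥N → ℝ) →ₗ[ℝ] (M → ℝ),
      (∀ g : ↥N → ℝ, ∀ z : ↥N, E g (z : M) = g z) ∧
      (∀ L : ℝ, 0 ≤ L → ∀ g : ↥N → ℝ,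
        (∀ z w : ↥N, |g z - g w| ≤ L * dist z w) →
        ∀ x y : M, |E g x - E g y| ≤ (1680 * (D : ℝ) ^ 4 * L) * dist x y) := by
  obtain ⟨Z, hZ⟩ := hdoub.exists_isDyadicNetFamily
  have hD : (1 : ℝ) ≤ (D : ℝ) ^ 4 := one_le_pow₀ (by exact_mod_cast hdoub.one_le hne)
  refine ⟨extensionLinearMap hZ, extension_of_mem, fun L hL g hg x y => ?_⟩
  calc |extension Z g x - extension Z g y| ≤ (280 + 260 * ((D ^ 4 : ℕ) : ℝ)) * L * dist x y :=
        hZ.abs_extension_sub_extension_le hne hcl hL hg x y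
    _ ≤ 1680 * (D : ℝ) ^ 4 * L * dist x y := by
        push_cast
        gcongr
        linarith

/-- **Bounded linear extension operator for Lipschitz functions on a doubling subset.**
Let `(M, d)` be a metric space and `N ⊆ M` a nonempty closed subset which, with the induced
metric, has doubling constant `D ≥ 2`.  Then there is an `ℝ`-linear map `E` from the functions
on `N` to the functions on `M` such that `E g` restricts to `g` on `N`, and `E g` is
`(1680·D⁴·L)`-Lipschitz whenever `g` is `L`-Lipschitz. -/
theorem stmt6 (M : Type) [MetricSpace M] (N : Set M) (hne : N.Nonempty)
    (hcl : IsClosed N) (D : ℕ) (hD : 2 ≤ D) (hdoub : SubsetDoublingConstant N D) :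
    ∃ E : (↥N → ℝ) →ₗ[ℝ] (M → ℝ),
      (∀ g : ↥N → ℝ, ∀ z : ↥N, E g (z : M) = g z) ∧
      (∀ L : ℝ, 0 ≤ L → ∀ g : ↥N → ℝ,
        (∀ z w : ↥N, |g z - g w| ≤ L * dist z w) →
        ∀ x y : M, |E g x - E g y| ≤ (1680 * (D : ℝ) ^ 4 * L) * dist x y) :=
  stmt6_general M N hne hcl D hdoub
end

section
/- Let (M, d, 0) be a pointed metric space which is geodesic, i.e., for all x, y ∈ M there exists γ : [0,1] → M with γ(0) = x, γ(1) = y and d(γ(s), γ(t)) = |s − t|·d(x, y) for all s, t ∈ [0,1]. Let σ : M × [0,1] → M satisfy: (G1) σ(x, 0) = 0 and σ(x, 1) = x for all x ∈ M; (G2) d(σ(x, t), σ(x, s)) ≤ |s − t|·d(x, 0) for all x ∈ M and s, t ∈ [0,1]; (G3) d(σ(x, t), σ(y, t)) ≤ t·d(x, y) for all x, y ∈ M and t ∈ [0,1]. Let S > 0 and let N ⊆ M be such that for every x ∈ N with d(x, 0) > S one has σ(x, S/d(x, 0)) ∈ N. Then the map r : N → N defined by r(x) = x if d(x, 0) ≤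 S and r(x) = σ(x, S/d(x, 0)) if d(x, 0) > S is 2-Lipschitz, takes values in N_{[0,S]} := {y ∈ N : d(y, 0) ≤ S}, and satisfies r(x) = x for every x ∈ N_{[0,S]}; in other words, r is a 2-Lipschitz retraction of N onto N_{[0,S]}. -/
/-!
Write `a = d(x,0) ≤ b = d(y,0)` and `D = d(x,y) ≥ b - a`. Moving from `σ(·, t)` to `σ(·, t')` on
the same point costs at most `|t - t'|` times its distance to `0` (G2), and moving between two
points at a common time `t` costs at most `t·D` (G3). If only `y` is pushed in, to time `u = S/b`,
then `d(x, σ(y,u)) ≤ (1-u)a + uD` and `(1-u)a ≤ (1-u)b = b - S ≤ b - a`. If both are pushed in, to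
times `t = S/a ≥ u = S/b`, then `d(σ(x,t), σ(y,u)) ≤ tD + (t-u)b` and `(t-u)b = t(b-a)`.
Either way the distance is at most `2D`.
-/

open Set

structure IsSelfSimilarContraction {M : Type*} [PseudoMetricSpace M] (o : M)
    (σ : M → ℝ → M) : Prop where
  apply_zero : ∀ x, σ x 0 = o
  apply_one : ∀ x, σ x 1 = x
  dist_apply_apply_le : ∀ x, ∀ s ∈ Icc (0 : ℝ) 1, ∀ t ∈ Icc (0 : ℝ) 1,
    dist (σ x t) (σ x s) ≤ |s - t| * dist x o
  dist_apply_le : ∀ x y, ∀ t ∈ Icc (0 : ℝ) 1, dist (σ x t) (σ y t) ≤ t * dist x y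

theorem div_mem_Icc_zero_one_of_lt {S d : ℝ} (hS : 0 ≤ S) (h : S < d) : S / d ∈ Icc (0 : ℝ) 1 :=
  ⟨div_nonneg hS (hS.trans h.le), div_le_one_of_le₀ h.le (hS.trans h.le)⟩

namespace IsSelfSimilarContraction

variable {M : Type*} [PseudoMetricSpace M] {o : M} {σ : M → ℝ → M}

theorem dist_apply_apply_le_of_le (hσ : IsSelfSimilarContraction o σ) (x : M) {s t : ℝ}
    (hs : s ∈ Icc (0 : ℝ) 1) (ht : t ∈ Icc (0 : ℝ) 1) (hst : s ≤ t) :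
    dist (σ x t) (σ x s) ≤ (t - s) * dist x o := by
  rw [← abs_of_nonneg (sub_nonneg.2 hst), abs_sub_comm]
  exact hσ.dist_apply_apply_le x s hs t ht

theorem dist_apply_base_le (hσ : IsSelfSimilarContraction o σ) (x : M) {t : ℝ}
    (ht : t ∈ Icc (0 : ℝ) 1) : dist (σ x t) o ≤ t * dist x o := by
  simpa [hσ.apply_zero] using hσ.dist_apply_apply_le_of_le x ⟨le_rfl, zero_le_one⟩ ht ht.1

theorem dist_apply_le_one_sub (hσ : IsSelfSimilarContraction o σ) (x : M) {t : ℝ}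
    (ht : t ∈ Icc (0 : ℝ) 1) : dist x (σ x t) ≤ (1 - t) * dist x o := by
  simpa [hσ.apply_one] using hσ.dist_apply_apply_le_of_le x ht ⟨zero_le_one, le_rfl⟩ ht.2

end IsSelfSimilarContraction

section RadialRetraction

variable {M : Type*} [PseudoMetricSpace M] {o : M} {σ : M → ℝ → M} {S : ℝ}

noncomputable def radialRetraction (σ : M → ℝ → M) (o : M) (S : ℝ) (x : M) : M :=
  if dist x o ≤ S then x else σ x (S / dist x o)

theorem radialRetraction_of_le {x : M} (h : dist x o ≤ S) : radialRetraction σ o S x = x :=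
  if_pos h

theorem radialRetraction_of_lt {x : M} (h : S < dist x o) :
    radialRetraction σ o S x = σ x (S / dist x o) :=
  if_neg h.not_ge

theorem radialRetraction_mem {N : Set M} (hN : ∀ x ∈ N, S < dist x o → σ x (S / dist x o) ∈ N)
    {x : M} (hx : x ∈ N) : radialRetraction σ o S x ∈ N := by
  rcases le_or_gt (dist x o) S with h | h
  · rwa [radialRetraction_of_le h]
  · rw [radialRetraction_of_lt h]
    exact hN x hx h

namespace IsSelfSimilarContraction

theorem dist_radialRetraction_le (hσ : IsSelfSimilarContraction o σ) (hS : 0 ≤ S) (x : M) :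
    dist (radialRetraction σ o S x) o ≤ S := by
  rcases le_or_gt (dist x o) S with h | h
  · rwa [radialRetraction_of_le h]
  · rw [radialRetraction_of_lt h]
    calc dist (σ x (S / dist x o)) o ≤ S / dist x o * dist x o :=
          hσ.dist_apply_base_le x (div_mem_Icc_zero_one_of_lt hS h)
      _ = S := div_mul_cancel₀ S (hS.trans_lt h).ne'

theorem dist_apply_div_le_two_mul (hσ : IsSelfSimilarContraction o σ) (hS : 0 ≤ S) {x y : M}
    (hx : dist x o ≤ S) (hy : S < dist y o) :
    dist x (σ y (S / dist y o)) ≤ 2 * dist x y := by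
  have hu := div_mem_Icc_zero_one_of_lt hS hy
  set u := S / dist y o
  have hub : u * dist y o = S := div_mul_cancel₀ S (hS.trans_lt hy).ne'
  have hpush : (1 - u) * dist x o ≤ dist x y := by
    have := dist_triangle_left y o x
    nlinarith [mul_le_mul_of_nonneg_left hx (sub_nonneg.2 hu.2)]
  calc dist x (σ y u) ≤ dist x (σ x u) + dist (σ x u) (σ y u) := dist_triangle _ _ _
    _ ≤ (1 - u) * dist x o + u * dist x y :=
        add_le_add (hσ.dist_apply_le_one_sub x hu) (hσ.dist_apply_le x y u hu)
    _ ≤ 2 * dist x y := by nlinarith [hu.2, dist_nonneg (x := x) (y := y)]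

theorem dist_apply_div_apply_div_le_two_mul (hσ : IsSelfSimilarContraction o σ) (hS : 0 ≤ S)
    {x y : M} (hx : S < dist x o) (hxy : dist x o ≤ dist y o) :
    dist (σ x (S / dist x o)) (σ y (S / dist y o)) ≤ 2 * dist x y := by
  have ht := div_mem_Icc_zero_one_of_lt hS hx
  have hu := div_mem_Icc_zero_one_of_lt hS (hx.trans_le hxy)
  have hut : S / dist y o ≤ S / dist x o := div_le_div_of_nonneg_left hS (hS.trans_lt hx) hxy
  set t := S / dist x o
  set u := S / dist y o
  have hta : t * dist x o = S := div_mul_cancel₀ S (hS.trans_lt hx).ne'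
  have hub : u * dist y o = S := div_mul_cancel₀ S (hS.trans_lt (hx.trans_le hxy)).ne'
  have hpush : (t - u) * dist y o ≤ dist x y := by
    have := dist_triangle_left y o x
    nlinarith [mul_le_mul_of_nonneg_right ht.2 (sub_nonneg.2 hxy)]
  calc dist (σ x t) (σ y u) ≤ dist (σ x t) (σ y t) + dist (σ y t) (σ y u) := dist_triangle _ _ _
    _ ≤ t * dist x y + (t - u) * dist y o :=
        add_le_add (hσ.dist_apply_le x y t ht) (hσ.dist_apply_apply_le_of_le y hu ht hut)
    _ ≤ 2 * dist x y := by nlinarith [ht.2, dist_nonneg (x := x) (y := y)]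

theorem dist_radialRetraction_le_two_mul_of_le (hσ : IsSelfSimilarContraction o σ) (hS : 0 ≤ S)
    {x y : M} (hxy : dist x o ≤ dist y o) :
    dist (radialRetraction σ o S x) (radialRetraction σ o S y) ≤ 2 * dist x y := by
  rcases le_or_gt (dist y o) S with hy | hy
  · rw [radialRetraction_of_le (hxy.trans hy), radialRetraction_of_le hy]
    linarith [dist_nonneg (x := x) (y := y)]
  rw [radialRetraction_of_lt hy]
  rcases le_or_gt (dist x o) S with hx | hx
  · rw [radialRetraction_of_le hx]
    exact hσ.dist_apply_div_le_two_mul hS hx hy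
  · rw [radialRetraction_of_lt hx]
    exact hσ.dist_apply_div_apply_div_le_two_mul hS hx hxy

theorem lipschitzWith_radialRetraction (hσ : IsSelfSimilarContraction o σ) (hS : 0 ≤ S) :
    LipschitzWith 2 (radialRetraction σ o S) := by
  refine LipschitzWith.of_dist_le_mul fun x y => ?_
  rcases le_total (dist x o) (dist y o) with hxy | hyx
  · exact_mod_cast hσ.dist_radialRetraction_le_two_mul_of_le hS hxy
  · rw [dist_comm, dist_comm x]
    exact_mod_cast hσ.dist_radialRetraction_le_two_mul_of_le hS hyx

end IsSelfSimilarContraction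

end RadialRetraction

theorem stmt7_general (M : Type) [MetricSpace M] (o : M)
    (σ : M → ℝ → M)
    (hG1 : ∀ x : M, σ x 0 = o ∧ σ x 1 = x)
    (hG2 : ∀ x : M, ∀ s ∈ Set.Icc (0 : ℝ) 1, ∀ t ∈ Set.Icc (0 : ℝ) 1,
      dist (σ x t) (σ x s) ≤ |s - t| * dist x o)
    (hG3 : ∀ x y : M, ∀ t ∈ Set.Icc (0 : ℝ) 1,
      dist (σ x t) (σ y t) ≤ t * dist x y)
    (S : ℝ) (hS : 0 < S) (N : Set M)
    (hN : ∀ x ∈ N, S < dist x o → σ x (S / dist x o) ∈ N)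
    (r : M → M)
    (hr₁ : ∀ x : M, dist x o ≤ S → r x = x)
    (hr₂ : ∀ x : M, S < dist x o → r x = σ x (S / dist x o)) :
    (∀ x ∈ N, r x ∈ N ∧ dist (r x) o ≤ S) ∧
    (∀ x ∈ N, dist x o ≤ S → r x = x) ∧
    (∀ x ∈ N, ∀ y ∈ N, dist (r x) (r y) ≤ 2 * dist x y) := by
  have hσ : IsSelfSimilarContraction o σ :=
    ⟨fun x => (hG1 x).1, fun x => (hG1 x).2, hG2, hG3⟩
  obtain rfl : r = radialRetraction σ o S := funext fun x => by
    rcases le_or_gt (dist x o) S with h | h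
    · rw [hr₁ x h, radialRetraction_of_le h]
    · rw [hr₂ x h, radialRetraction_of_lt h]
  refine ⟨fun x hx => ⟨radialRetraction_mem hN hx, hσ.dist_radialRetraction_le hS.le x⟩,
    fun x _ h => radialRetraction_of_le h, fun x _ y _ => ?_⟩
  simpa using (hσ.lipschitzWith_radialRetraction hS.le).dist_le_mul x y

/-- **Radial retraction onto a ball via a self-similar contraction.**
Let `(M, d, 0)` be a geodesic pointed metric space with a self-similar contraction
`σ : M × [0,1] → M` (conditions (G1)–(G3)).  Let `S > 0` and `N ⊆ M` be such that whenever
`x ∈ N` has `d(x,0) > S`, the point `σ(x, S/d(x,0))` belongs to `N`.  Then the map `r`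
defined by `r x = x` if `d(x,0) ≤ S` and `r x = σ(x, S/d(x,0))` otherwise is a `2`-Lipschitz
retraction of `N` onto `N_{[0,S]} = {y ∈ N : d(y,0) ≤ S}`. -/
theorem stmt7 (M : Type) [MetricSpace M] (o : M)
    (hgeo : ∀ x y : M, ∃ γ : ℝ → M, γ 0 = x ∧ γ 1 = y ∧
      ∀ s ∈ Set.Icc (0 : ℝ) 1, ∀ t ∈ Set.Icc (0 : ℝ) 1,
        dist (γ s) (γ t) = |s - t| * dist x y)
    (σ : M → ℝ → M)
    (hG1 : ∀ x : M, σ x 0 = o ∧ σ x 1 = x)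
    (hG2 : ∀ x : M, ∀ s ∈ Set.Icc (0 : ℝ) 1, ∀ t ∈ Set.Icc (0 : ℝ) 1,
      dist (σ x t) (σ x s) ≤ |s - t| * dist x o)
    (hG3 : ∀ x y : M, ∀ t ∈ Set.Icc (0 : ℝ) 1,
      dist (σ x t) (σ y t) ≤ t * dist x y)
    (S : ℝ) (hS : 0 < S) (N : Set M)
    (hN : ∀ x ∈ N, S < dist x o → σ x (S / dist x o) ∈ N)
    (r : M → M)
    (hr₁ : ∀ x : M, dist x o ≤ S → r x = x)
    (hr₂ : ∀ x : M, S < dist x o → r x = σ x (S / dist x o)) :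
    (∀ x ∈ N, r x ∈ N ∧ dist (r x) o ≤ S) ∧
    (∀ x ∈ N, dist x o ≤ S → r x = x) ∧
    (∀ x ∈ N, ∀ y ∈ N, dist (r x) (r y) ≤ 2 * dist x y) :=
  stmt7_general M o σ hG1 hG2 hG3 S hS N hN r hr₁ hr₂
end

section
/- Let (M, d) be a metric space, z ∈ M, 0 < p ≤ 1 and K > 1. If x, y ∈ M satisfy K·d(z, x) ≤ d(z, y), then d(z, x)^p + d(z, y)^p ≤ ((K^p + 1)/(K^p − 1))·d(x, y)^p. -/
/-! Since `t ↦ t ^ p` is subadditive, `d ^ p` still satisfies the triangle inequality, so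
`d(z,y)^p ≤ d(z,x)^p + d(x,y)^p`. Together with `K^p d(z,x)^p ≤ d(z,y)^p` this bounds `d(z,x)^p`
by `d(x,y)^p / (K^p - 1)`, and the claim is elementary algebra in the three `p`-th powers. -/

theorem dist_rpow_triangle {M : Type*} [PseudoMetricSpace M] (x y z : M) {p : ℝ}
    (hp₀ : 0 ≤ p) (hp₁ : p ≤ 1) :
    dist x z ^ p ≤ dist x y ^ p + dist y z ^ p :=
  calc dist x z ^ p ≤ (dist x y + dist y z) ^ p :=
        Real.rpow_le_rpow dist_nonneg (dist_triangle x y z) hp₀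
    _ ≤ dist x y ^ p + dist y z ^ p :=
        Real.rpow_add_le_add_rpow dist_nonneg dist_nonneg hp₀ hp₁

theorem add_le_div_mul_of_mul_le_of_le_add {a b c k : ℝ} (hk : 1 < k)
    (hab : k * a ≤ b) (hbc : b ≤ a + c) :
    a + b ≤ (k + 1) / (k - 1) * c := by
  have hk₁ : 0 < k - 1 := sub_pos.mpr hk
  have hac : (k - 1) * a ≤ c := by linarith
  rw [div_mul_eq_mul_div, le_div_iff₀ hk₁]
  nlinarith

/-- **Separated annuli inequality.**
Let `(M, d)` be a metric space, `z ∈ M`, `0 < p ≤ 1` and `K > 1`.  If `x, y ∈ M` satisfy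
`K·d(z,x) ≤ d(z,y)`, then `d(z,x)^p + d(z,y)^p ≤ ((K^p + 1)/(K^p − 1))·d(x,y)^p`. -/
theorem stmt8 (M : Type) [MetricSpace M] (z x y : M) (p K : ℝ)
    (hp₀ : 0 < p) (hp₁ : p ≤ 1) (hK : 1 < K)
    (h : K * dist z x ≤ dist z y) :
    dist z x ^ p + dist z y ^ p ≤ ((K ^ p + 1) / (K ^ p - 1)) * dist x y ^ p := by
  have hKp : K ^ p * dist z x ^ p ≤ dist z y ^ p := by
    rw [← Real.mul_rpow (by linarith) dist_nonneg]
    exact Real.rpow_le_rpow (by positivity) h hp₀.le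
  exact add_le_div_mul_of_mul_le_of_le_add (Real.one_lt_rpow hK hp₀) hKp
    (dist_rpow_triangle z x y hp₀.le hp₁)
end

section
/- Let 1 ≤ p < ∞ and λ ≥ 1, and let (X_n)_{n ∈ ℕ} be a sequence of real Banach spaces each of which has the λ-bounded approximation property. Then the Banach space (⊕_{n ∈ ℕ} X_n)_p has the λ-bounded approximation property. -/
open scoped ENNReal

/-!
Given a compact `K ⊆ (⊕ₙ Xₙ)_p` and `ε > 0`, Dini's theorem makes the `ℓ_p`-tails of the
elements of `K` uniformly smaller than `ε / 2` outside some finite set `s` of coordinates.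
For `n ∈ s`, the `λ`-BAP of `Xₙ` on the compact projection of `K` gives `Tₙ` with
`‖Tₙ‖ ≤ λ + δ` and accuracy `δ = ε / (2 (#s + 1))`. The block-diagonal operator with blocks
`Tₙ` (`n ∈ s`) has finite rank, norm at most `max ‖Tₙ‖` because the `ℓ_p`-norm is monotone in
the coordinate norms, and moves each point of `K` by at most `ε / 2 + #s δ ≤ ε`.
-/

def HasBAP (lam : ℝ) (X : Type*) [NormedAddCommGroup X] [NormedSpace ℝ X] : Prop :=
  ∀ K : Set X, IsCompact K → ∀ ε : ℝ, 0 < ε →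
    ∃ T : X →L[ℝ] X, FiniteDimensional ℝ (LinearMap.range (T : X →ₗ[ℝ] X)) ∧
      ‖T‖ ≤ lam + ε ∧ ∀ x ∈ K, ‖x - T x‖ ≤ ε

open Filter Topology Finset

namespace lp

variable {α : Type*} {E : α → Type*} [∀ i, NormedAddCommGroup (E i)]
  {p : ℝ≥0∞} [Fact (1 ≤ p)]

theorem norm_le_mul_norm_of_forall_norm_apply_le {C : ℝ} (hC : 0 ≤ C) {f g : lp E p}
    (h : ∀ i, ‖g i‖ ≤ C * ‖f i‖) : ‖g‖ ≤ C * ‖f‖ := by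
  rcases eq_or_ne p ∞ with rfl | hp
  · exact lp.norm_le_of_forall_le (by positivity) fun i =>
      (h i).trans (mul_le_mul_of_nonneg_left (lp.norm_apply_le_norm ENNReal.top_ne_zero f i) hC)
  have hp₀ : 0 < p.toReal := ENNReal.toReal_pos (zero_lt_one.trans_le Fact.out).ne' hp
  refine lp.norm_le_of_forall_sum_le hp₀ (by positivity) fun s => ?_
  calc ∑ i ∈ s, ‖g i‖ ^ p.toReal
      ≤ ∑ i ∈ s, (C * ‖f i‖) ^ p.toReal := by gcongr with i; exact h i
    _ = C ^ p.toReal * ∑ i ∈ s, ‖f i‖ ^ p.toReal := by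
      simp only [Real.mul_rpow hC (norm_nonneg _), mul_sum]
    _ ≤ C ^ p.toReal * ‖f‖ ^ p.toReal := by gcongr; exact lp.sum_rpow_le_norm_rpow hp₀ f s
    _ = (C * ‖f‖) ^ p.toReal := (Real.mul_rpow hC (norm_nonneg _)).symm

variable [DecidableEq α]

theorem norm_sub_sum_single_le_of_subset (hp : 0 < p.toReal) (f : lp E p) {s t : Finset α}
    (hst : s ⊆ t) :
    ‖f - ∑ i ∈ t, lp.single p i (f i)‖ ≤ ‖f - ∑ i ∈ s, lp.single p i (f i)‖ := by
  rw [← Real.rpow_le_rpow_iff (norm_nonneg _) (norm_nonneg _) hp,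
    lp.norm_compl_sum_single hp f s, lp.norm_compl_sum_single hp f t]
  exact sub_le_sub_left (sum_le_sum_of_subset_of_nonneg hst fun i _ _ => by positivity) _

/-- The tails `f - ∑ i ∈ s, single i (f i)` decrease in `s` and tend to `0` pointwise, so by
Dini's theorem they tend to `0` uniformly on compact sets. -/
theorem exists_finset_forall_norm_sub_sum_single_lt (hp : p ≠ ∞)
    {K : Set (lp E p)} (hK : IsCompact K) {ε : ℝ} (hε : 0 < ε) :
    ∃ s : Finset α, ∀ f ∈ K, ‖f - ∑ i ∈ s, lp.single p i (f i)‖ < ε := by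
  have hp₀ : 0 < p.toReal := ENNReal.toReal_pos (zero_lt_one.trans_le Fact.out).ne' hp
  have hcont (s : Finset α) : Continuous fun f : lp E p => ‖f - ∑ i ∈ s, lp.single p i (f i)‖ :=
    (continuous_id.sub <| continuous_finsetSum s fun i _ =>
      (lp.isometry_single i).continuous.comp (lp.lipschitzWith_one_eval p i).continuous).norm
  have hlim (f : lp E p) :
      Tendsto (fun s : Finset α => ‖f - ∑ i ∈ s, lp.single p i (f i)‖) atTop (𝓝 0) := by
    simpa only [norm_sub_rev f, SummationFilter.unconditional_filter] using
      tendsto_iff_norm_sub_tendsto_zero.mp (lp.hasSum_single hp f)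
  have hunif := Antitone.tendstoUniformlyOn_of_forall_tendsto hK (fun s => (hcont s).continuousOn)
    (fun f _ _ _ hst => norm_sub_sum_single_le_of_subset hp₀ f hst) continuousOn_const
    (fun f _ => hlim f)
  obtain ⟨s, hs⟩ := (Metric.tendstoUniformlyOn_iff.mp hunif ε hε).exists
  exact ⟨s, fun f hf => by simpa using hs f hf⟩

section BlockDiag

variable {𝕜 : Type*} [NontriviallyNormedField 𝕜] [∀ i, NormedSpace 𝕜 (E i)]

variable (p) in
noncomputable def blockDiag (s : Finset α) (T : ∀ i, E i →L[𝕜] E i) : lp E p →L[𝕜] lp E p :=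
  ∑ i ∈ s, (lp.singleContinuousLinearMap 𝕜 E p i).comp ((T i).comp (lp.evalCLM 𝕜 E p i))

variable {s : Finset α} {T : ∀ i, E i →L[𝕜] E i}

theorem blockDiag_apply (f : lp E p) :
    blockDiag p s T f = ∑ i ∈ s, lp.single p i (T i (f i)) := by
  simp [blockDiag, lp.evalCLM]

theorem blockDiag_apply_apply (f : lp E p) (i : α) :
    blockDiag p s T f i = if i ∈ s then T i (f i) else 0 := by
  simp only [blockDiag_apply, lp.coeFn_sum, Finset.sum_apply, lp.single_apply,
    Finset.sum_pi_single]

theorem norm_blockDiag_le {C : ℝ} (hC : 0 ≤ C) (hT : ∀ i ∈ s, ‖T i‖ ≤ C) :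
    ‖blockDiag p s T‖ ≤ C := by
  refine ContinuousLinearMap.opNorm_le_bound _ hC fun f =>
    norm_le_mul_norm_of_forall_norm_apply_le hC fun i => ?_
  rw [blockDiag_apply_apply]
  split_ifs with hi
  · exact (T i).le_of_opNorm_le (hT i hi) (f i)
  · simpa using mul_nonneg hC (norm_nonneg (f i))

theorem finiteDimensional_range_blockDiag
    (hT : ∀ i ∈ s, FiniteDimensional 𝕜 (LinearMap.range (T i : E i →ₗ[𝕜] E i))) :
    FiniteDimensional 𝕜 (LinearMap.range (blockDiag p s T : lp E p →ₗ[𝕜] lp E p)) := by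
  refine IsNoetherian.iff_fg.mp ?_
  change (blockDiag p s T : lp E p →ₗ[𝕜] lp E p) ∈ LinearMap.finiteRange 𝕜 _ _
  rw [blockDiag, ContinuousLinearMap.toLinearMap_sum]
  refine Submodule.sum_mem _ fun i hi => ?_
  have : (T i : E i →ₗ[𝕜] E i).HasNoetherianRange := IsNoetherian.iff_fg.mpr (hT i hi)
  exact (this.comp_right _).comp_left _

theorem norm_sub_blockDiag_apply_le (f : lp E p) :
    ‖f - blockDiag p s T f‖ ≤
      ‖f - ∑ i ∈ s, lp.single p i (f i)‖ + ∑ i ∈ s, ‖f i - T i (f i)‖ := by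
  have hp₀ : 0 < p := zero_lt_one.trans_le Fact.out
  calc ‖f - blockDiag p s T f‖
      = ‖(f - ∑ i ∈ s, lp.single p i (f i)) + ∑ i ∈ s, lp.single p i (f i - T i (f i))‖ := by
        simp only [blockDiag_apply, lp.single_sub, sum_sub_distrib, sub_add_sub_cancel]
    _ ≤ ‖f - ∑ i ∈ s, lp.single p i (f i)‖ + ∑ i ∈ s, ‖lp.single p i (f i - T i (f i))‖ :=
        (norm_add_le _ _).trans (add_le_add_right (norm_sum_le _ _) _)
    _ = ‖f - ∑ i ∈ s, lp.single p i (f i)‖ + ∑ i ∈ s, ‖f i - T i (f i)‖ := by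
        simp only [lp.norm_single hp₀]

end BlockDiag

end lp

/-- **The `λ`-bounded approximation property passes to `ℓ_p`-sums.**
Let `1 ≤ p < ∞` and `λ ≥ 1`, and let `(X_n)` be a sequence of Banach spaces each having the
`λ`-bounded approximation property.  Then `(⊕ₙ X_n)_p` has the `λ`-bounded approximation
property. -/
theorem stmt10 (p : ℝ≥0∞) [Fact (1 ≤ p)] (hp : p ≠ ∞) (lam : ℝ) (hlam : 1 ≤ lam)
    (X : ℕ → Type) (_ : ∀ n, NormedAddCommGroup (X n)) (_ : ∀ n, NormedSpace ℝ (X n))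
    (hbap : ∀ n, HasBAP lam (X n)) :
    HasBAP lam (lp X p) := by
  intro K hK ε hε
  obtain ⟨s, hs⟩ := lp.exists_finset_forall_norm_sub_sum_single_lt hp hK (half_pos hε)
  set δ := ε / (2 * (#s + 1)) with hδ_def
  have hδ : 0 < δ := by positivity
  have hsδ : #s * δ + δ = ε / 2 := by rw [hδ_def]; field_simp
  have hδε : δ ≤ ε := by nlinarith
  choose T hT_fin hT_norm hT_approx using fun n =>
    hbap n _ (hK.image (lp.evalCLM ℝ X p n).continuous) δ hδ
  refine ⟨lp.blockDiag p s T, lp.finiteDimensional_range_blockDiag fun n _ => hT_fin n,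
    ?_, fun x hx => ?_⟩
  · exact lp.norm_blockDiag_le (by linarith) fun n _ => (hT_norm n).trans (by linarith)
  · calc ‖x - lp.blockDiag p s T x‖
        ≤ ‖x - ∑ i ∈ s, lp.single p i (x i)‖ + ∑ i ∈ s, ‖x i - T i (x i)‖ :=
          lp.norm_sub_blockDiag_apply_le x
      _ ≤ ε / 2 + ∑ _i ∈ s, δ :=
          add_le_add (hs x hx).le (sum_le_sum fun i _ => hT_approx i _ ⟨x, hx, rfl⟩)
      _ ≤ ε := by rw [sum_const, nsmul_eq_mul]; linarith
end

section
/- Let d ≥ 1 and let S^d = {x ∈ ℝ^{d+1} : |x| = 1} be the Euclidean unit sphere. Set C = {x ∈ S^d : x_{d+1} ≤ 1/2} and C₀ = {x ∈ S^d : x_{d+1} ≤ 0}. Then there exist L ≥ 0 and a map r : C → C₀ such that r is L-Lipschitz with respect to the Euclidean distance and r(x) = x for every x ∈ C₀; that is, C₀ is a Lipschitz retract of C. -/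
/-!
Push a point of `C` straight down onto the closed half-space `{x_{d+1} ≤ 0}` by replacing
`x_{d+1}` with `min x_{d+1} 0`, then renormalise onto the sphere. The first step is
`1`-Lipschitz and moves a point of `C` by at most `1/2`, so its image stays at distance
`≥ 1/2` from the origin, where radial projection `v ↦ v / ‖v‖` is `4`-Lipschitz.
-/

section ClampCoord

variable {ι : Type*} [DecidableEq ι]

noncomputable def clampCoordNonpos (i : ι) (x : EuclideanSpace ℝ ι) : EuclideanSpace ℝ ι :=
  WithLp.toLp 2 fun j => if j = i then min (x i) 0 else x j

lemma clampCoordNonpos_apply (i j : ι) (x : EuclideanSpace ℝ ι) :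
    clampCoordNonpos i x j = if j = i then min (x i) 0 else x j :=
  rfl

lemma clampCoordNonpos_apply_self_nonpos (i : ι) (x : EuclideanSpace ℝ ι) :
    clampCoordNonpos i x i ≤ 0 := by
  simp [clampCoordNonpos_apply]

lemma clampCoordNonpos_of_nonpos {i : ι} {x : EuclideanSpace ℝ ι} (hx : x i ≤ 0) :
    clampCoordNonpos i x = x := by
  ext j
  rw [clampCoordNonpos_apply]
  split_ifs with hj
  · subst hj; exact min_eq_left hx
  · rfl

lemma dist_clampCoordNonpos_le [Fintype ι] (i : ι) (x y : EuclideanSpace ℝ ι) :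
    dist (clampCoordNonpos i x) (clampCoordNonpos i y) ≤ dist x y := by
  rw [EuclideanSpace.dist_eq, EuclideanSpace.dist_eq]
  gcongr with j
  rw [clampCoordNonpos_apply, clampCoordNonpos_apply]
  split_ifs with hj
  · subst hj
    simpa using (LipschitzWith.id.min_const 0).dist_le_mul (x j) (y j)
  · rfl

lemma sub_clampCoordNonpos (i : ι) (x : EuclideanSpace ℝ ι) :
    x - clampCoordNonpos i x = EuclideanSpace.single i (max (x i) 0) := by
  ext j
  rw [PiLp.sub_apply, clampCoordNonpos_apply, PiLp.single_apply]
  split_ifs with hj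
  · subst hj; linarith [min_add_max (x j) 0]
  · exact sub_self _

lemma norm_sub_max_le_norm_clampCoordNonpos [Fintype ι] (i : ι) (x : EuclideanSpace ℝ ι) :
    ‖x‖ - max (x i) 0 ≤ ‖clampCoordNonpos i x‖ := by
  have h := norm_sub_norm_le x (x - clampCoordNonpos i x)
  rwa [sub_sub_cancel, sub_clampCoordNonpos, PiLp.norm_single,
    Real.norm_of_nonneg (le_max_right _ _)] at h

end ClampCoord

section InvNormSmul

variable {E : Type*} [NormedAddCommGroup E] [NormedSpace ℝ E]

lemma norm_inv_norm_smul_sub_inv_norm_smul_le {a : E} (ha : a ≠ 0) (b : E) :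
    ‖‖a‖⁻¹ • a - ‖b‖⁻¹ • b‖ ≤ 2 / ‖a‖ * ‖a - b‖ := by
  have ha' : 0 < ‖a‖ := norm_pos_iff.2 ha
  have hscale : ‖(‖a‖⁻¹ - ‖b‖⁻¹) • b‖ ≤ ‖a‖⁻¹ * ‖a - b‖ := by
    rcases eq_or_ne b 0 with rfl | hb
    · simp [ha'.ne']
    have hb' : 0 < ‖b‖ := norm_pos_iff.2 hb
    calc ‖(‖a‖⁻¹ - ‖b‖⁻¹) • b‖ = ‖a‖⁻¹ * |‖a‖ - ‖b‖| := by
          rw [norm_smul, Real.norm_eq_abs, inv_sub_inv ha'.ne' hb'.ne', abs_div,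
            abs_of_pos (mul_pos ha' hb'), abs_sub_comm]
          field_simp
      _ ≤ ‖a‖⁻¹ * ‖a - b‖ := by gcongr; exact abs_norm_sub_norm_le a b
  calc ‖‖a‖⁻¹ • a - ‖b‖⁻¹ • b‖ = ‖‖a‖⁻¹ • (a - b) + (‖a‖⁻¹ - ‖b‖⁻¹) • b‖ := by
        rw [smul_sub, sub_smul, sub_add_sub_cancel]
    _ ≤ ‖a‖⁻¹ * ‖a - b‖ + ‖a‖⁻¹ * ‖a - b‖ := by
        refine (norm_add_le _ _).trans (add_le_add ?_ hscale)
        rw [norm_smul, Real.norm_of_nonneg (inv_nonneg.2 ha'.le)]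
    _ = 2 / ‖a‖ * ‖a - b‖ := by ring

lemma dist_inv_norm_smul_le {a b : E} {c : ℝ} (hc : 0 < c) (ha : c ≤ ‖a‖) :
    dist (‖a‖⁻¹ • a) (‖b‖⁻¹ • b) ≤ 2 / c * dist a b := by
  rw [dist_eq_norm, dist_eq_norm]
  refine (norm_inv_norm_smul_sub_inv_norm_smul_le (norm_pos_iff.1 (hc.trans_le ha)) b).trans ?_
  gcongr

end InvNormSmul

theorem stmt12_general (d : ℕ) :
    ∃ L : ℝ, 0 ≤ L ∧
      ∃ r : EuclideanSpace ℝ (Fin (d + 1)) → EuclideanSpace ℝ (Fin (d + 1)),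
        (∀ x ∈ {x : EuclideanSpace ℝ (Fin (d + 1)) | ‖x‖ = 1 ∧ x (Fin.last d) ≤ 1 / 2},
          r x ∈ {x : EuclideanSpace ℝ (Fin (d + 1)) | ‖x‖ = 1 ∧ x (Fin.last d) ≤ 0}) ∧
        (∀ x ∈ {x : EuclideanSpace ℝ (Fin (d + 1)) | ‖x‖ = 1 ∧ x (Fin.last d) ≤ 0},
          r x = x) ∧
        (∀ x ∈ {x : EuclideanSpace ℝ (Fin (d + 1)) | ‖x‖ = 1 ∧ x (Fin.last d) ≤ 1 / 2},
         ∀ y ∈ {x : EuclideanSpace ℝ (Fin (d + 1)) | ‖x‖ = 1 ∧ x (Fin.last d) ≤ 1 / 2},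
          dist (r x) (r y) ≤ L * dist x y) := by
  set p := clampCoordNonpos (Fin.last d)
  have half_le_norm : ∀ x : EuclideanSpace ℝ (Fin (d + 1)),
      ‖x‖ = 1 → x (Fin.last d) ≤ 1 / 2 → 1 / 2 ≤ ‖p x‖ := fun x hx hlast =>
    calc (1 / 2 : ℝ) ≤ ‖x‖ - max (x (Fin.last d)) 0 := by
          rw [hx]; linarith [max_le hlast (by norm_num : (0 : ℝ) ≤ 1 / 2)]
      _ ≤ ‖p x‖ := norm_sub_max_le_norm_clampCoordNonpos _ x
  refine ⟨4, by norm_num, fun x => ‖p x‖⁻¹ • p x, ?_, ?_, ?_⟩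
  · rintro x ⟨hx, hlast⟩
    have hpx : p x ≠ 0 := norm_pos_iff.1 (by linarith [half_le_norm x hx hlast])
    refine ⟨norm_smul_inv_norm hpx, ?_⟩
    rw [PiLp.smul_apply, smul_eq_mul]
    exact mul_nonpos_of_nonneg_of_nonpos (by positivity) (clampCoordNonpos_apply_self_nonpos _ x)
  · rintro x ⟨hx, hlast⟩
    simp [p, clampCoordNonpos_of_nonpos hlast, hx]
  · rintro x ⟨hx, hxlast⟩ y -
    calc dist (‖p x‖⁻¹ • p x) (‖p y‖⁻¹ • p y) ≤ 2 / (1 / 2) * dist (p x) (p y) :=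
          dist_inv_norm_smul_le (by norm_num) (half_le_norm x hx hxlast)
      _ ≤ 2 / (1 / 2) * dist x y := by gcongr; exact dist_clampCoordNonpos_le _ x y
      _ = 4 * dist x y := by norm_num

/-- **The lower half-sphere is a Lipschitz retract of the sphere below latitude 1/2.**
Let `d ≥ 1`, `S^d ⊆ ℝ^{d+1}` the Euclidean unit sphere, `C = {x ∈ S^d : x_{d+1} ≤ 1/2}` and
`C₀ = {x ∈ S^d : x_{d+1} ≤ 0}`.  Then there are `L ≥ 0` and a map `r : C → C₀` which is
`L`-Lipschitz for the Euclidean distance and restricts to the identity on `C₀`. -/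
theorem stmt12 (d : ℕ) (hd : 1 ≤ d) :
    ∃ L : ℝ, 0 ≤ L ∧
      ∃ r : EuclideanSpace ℝ (Fin (d + 1)) → EuclideanSpace ℝ (Fin (d + 1)),
        (∀ x ∈ {x : EuclideanSpace ℝ (Fin (d + 1)) | ‖x‖ = 1 ∧ x (Fin.last d) ≤ 1 / 2},
          r x ∈ {x : EuclideanSpace ℝ (Fin (d + 1)) | ‖x‖ = 1 ∧ x (Fin.last d) ≤ 0}) ∧
        (∀ x ∈ {x : EuclideanSpace ℝ (Fin (d + 1)) | ‖x‖ = 1 ∧ x (Fin.last d) ≤ 0},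
          r x = x) ∧
        (∀ x ∈ {x : EuclideanSpace ℝ (Fin (d + 1)) | ‖x‖ = 1 ∧ x (Fin.last d) ≤ 1 / 2},
         ∀ y ∈ {x : EuclideanSpace ℝ (Fin (d + 1)) | ‖x‖ = 1 ∧ x (Fin.last d) ≤ 1 / 2},
          dist (r x) (r y) ≤ L * dist x y) :=
  stmt12_general d
end
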